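/- arXiv:0705.2437 — 9 statements merged into one kernel-verified Lean document; each statement's English description precedes it below -/
import Mathlib

section
/- Classical substate theorem: Let P and Q be probability distributions on Fin n with supp(P) ⊆ supp(Q) and S(P‖Q) ≤ c. Then for every real r > 1 there exist probability distributions P' and P'' on Fin n such that ‖P − P'‖₁ ≤ 2/r and Q = α·P' + (1−α)·P'', where α := (r−1)/(r·2^{r(c+1)}). -/
/-!
Let `k = 2 ^ (r (c + 1))` and let `t` be the event where `P` exceeds `k Q`. On `t` every term of
`S(P‖Q)` is at least `r (c + 1) P i`, while by the log-sum inequality the terms off `t` add up to at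
least `-1` (because `x log x ≥ -1/e > -log 2`). Hence `r (c + 1) P(t) ≤ c + 1`, and as `c ≥ 0` by
Gibbs' inequality, `P(t) ≤ 1/r`. Conditioning `P` on the complement of `t` gives `P'` with
`‖P - P'‖₁ = 2 P(t) ≤ 2/r` and `P' ≤ k Q / (1 - 1/r)`, that is `α P' ≤ Q`; then
`P'' = (Q - α P') / (1 - α)` is a distribution.
-/

open Matrix BigOperators
open scoped ComplexOrder

noncomputable section

/-- A quantum state: positive semidefinite matrix with unit trace. -/
def IsState {d : Type*} [Fintype d] (ρ : Matrix d d ℂ) : Prop :=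
  ρ.PosSemidef ∧ ρ.trace = 1

/-- `SuppLE ρ σ` : the support of `ρ` is contained in the support of `σ`,
expressed as inclusion of kernels the other way. -/
def SuppLE {d : Type*} [Fintype d] (ρ σ : Matrix d d ℂ) : Prop :=
  ∀ v : d → ℂ, σ *ᵥ v = 0 → ρ *ᵥ v = 0

/-- Matrix logarithm: apply `Real.log` to the eigenvalues (with `log 0 = 0`). -/
noncomputable def matLog {d : Type*} [Fintype d] [DecidableEq d]
    (ρ : Matrix d d ℂ) : Matrix d d ℂ :=
  if h : ρ.IsHermitian then
    (h.eigenvectorUnitary : Matrix d d ℂ) *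
      Matrix.diagonal (fun i => (Real.log (h.eigenvalues i) : ℂ)) *
      (star (h.eigenvectorUnitary : Matrix d d ℂ))
  else 0

/-- Quantum relative entropy `S(ρ‖σ) = Re Tr (ρ (log ρ - log σ))`. -/
noncomputable def relEnt {d : Type*} [Fintype d] [DecidableEq d]
    (ρ σ : Matrix d d ℂ) : ℝ :=
  (Matrix.trace (ρ * (matLog ρ - matLog σ))).re

/-- Trace norm of a Hermitian matrix: sum of absolute values of eigenvalues. -/
noncomputable def traceNorm {d : Type*} [Fintype d] [DecidableEq d]
    (A : Matrix d d ℂ) : ℝ :=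
  if h : A.IsHermitian then ∑ i, |h.eigenvalues i| else 0

/-- Rank-one operator `|ψ⟩⟨ψ|`. -/
def ketbra {d : Type*} (ψ : d → ℂ) : Matrix d d ℂ :=
  Matrix.of fun a b => ψ a * (starRingEnd ℂ) (ψ b)

/-- A POVM element: a positive semidefinite matrix `F` with `1 - F` positive semidefinite. -/
def IsPOVMElem {d : Type*} [Fintype d] [DecidableEq d] (F : Matrix d d ℂ) : Prop :=
  F.PosSemidef ∧ ((1 : Matrix d d ℂ) - F).PosSemidef

/-- `trR F ρ = Re Tr (F ρ)`. -/
noncomputable def trR {d : Type*} [Fintype d] (F ρ : Matrix d d ℂ) : ℝ :=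
  (Matrix.trace (F * ρ)).re

/-- Observational divergence `D(ρ‖σ)`. -/
noncomputable def obsDiv {d : Type*} [Fintype d] [DecidableEq d]
    (ρ σ : Matrix d d ℂ) : ℝ :=
  sSup {x : ℝ | ∃ F : Matrix d d ℂ, IsPOVMElem F ∧ trR F σ ≠ 0 ∧
    x = trR F ρ * Real.logb 2 (trR F ρ / trR F σ)}

/-- A probability distribution on `Fin n`. -/
def IsProbDist {n : ℕ} (P : Fin n → ℝ) : Prop :=
  (∀ i, 0 ≤ P i) ∧ ∑ i, P i = 1

/-- Classical relative entropy (base 2); terms with `P i = 0` contribute `0`. -/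
noncomputable def cRelEnt {n : ℕ} (P Q : Fin n → ℝ) : ℝ :=
  ∑ i, P i * Real.logb 2 (P i / Q i)

/-- Classical observational divergence. -/
noncomputable def cObsDiv {n : ℕ} (P Q : Fin n → ℝ) : ℝ :=
  sSup {x : ℝ | ∃ f : Fin n → ℝ, (∀ i, 0 ≤ f i ∧ f i ≤ 1) ∧
    (∑ i, f i * Q i) ≠ 0 ∧
    x = (∑ i, f i * P i) * Real.logb 2 ((∑ i, f i * P i) / (∑ i, f i * Q i))}


open Finset Real

lemma neg_exp_neg_one_le_mul_log {x : ℝ} (hx : 0 ≤ x) : -exp (-1) ≤ x * log x := by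
  rcases hx.eq_or_lt with rfl | hx
  · simp [(exp_pos _).le]
  have := mul_exp_neg_le_exp_neg_one (-log x)
  rw [neg_neg, exp_log hx] at this
  linarith

lemma neg_log_two_le_mul_log_div {a b : ℝ} (ha : 0 ≤ a) (hb : 0 ≤ b) (hb1 : b ≤ 1) :
    -log 2 ≤ a * log (a / b) := by
  have hlog2 : exp (-1) < log 2 := exp_neg_one_lt_half.trans (by linarith [log_two_gt_d9])
  rcases hb.eq_or_lt with rfl | hb
  · simp only [div_zero, log_zero, mul_zero, neg_nonpos]
    exact (log_pos one_lt_two).le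
  rcases ha.eq_or_lt with rfl | ha
  · simp only [zero_div, log_zero, mul_zero, neg_nonpos]
    exact (log_pos one_lt_two).le
  calc -log 2 ≤ a * log a := by linarith [neg_exp_neg_one_le_mul_log ha.le]
    _ ≤ a * log (a / b) := by
      gcongr
      exact le_div_self ha.le hb hb1

lemma mul_log_add_sub_mul_le_mul_log_div {p q l : ℝ} (hp : 0 ≤ p) (hq : 0 ≤ q)
    (hpq : q = 0 → p = 0) (hl : 0 < l) :
    p * log l + (p - l * q) ≤ p * log (p / q) := by
  rcases hp.eq_or_lt with rfl | hp
  · simp only [zero_mul, zero_sub, zero_add, neg_nonpos]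
    positivity
  have hq : 0 < q := hq.lt_of_ne fun h => hp.ne' (hpq h.symm)
  calc p * log l + (p - l * q) = p * log l + p * (1 - (p / (l * q))⁻¹) := by
        field_simp
    _ ≤ p * log l + p * log (p / (l * q)) := by
        gcongr
        exact one_sub_inv_le_log_of_pos (by positivity)
    _ = p * log (p / q) := by
        rw [← mul_add, ← log_mul hl.ne' (by positivity)]
        congr 2
        field_simp

theorem sum_mul_log_div_sum_le {ι : Type*} {s : Finset ι} {p q : ι → ℝ}
    (hp : ∀ i ∈ s, 0 ≤ p i) (hq : ∀ i ∈ s, 0 ≤ q i) (hpq : ∀ i ∈ s, q i = 0 → p i = 0) :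
    (∑ i ∈ s, p i) * log ((∑ i ∈ s, p i) / ∑ i ∈ s, q i) ≤ ∑ i ∈ s, p i * log (p i / q i) := by
  set a := ∑ i ∈ s, p i
  set b := ∑ i ∈ s, q i
  rcases (sum_nonneg hp : 0 ≤ a).eq_or_lt with ha | ha
  · have hp0 : ∀ i ∈ s, p i = 0 := (sum_eq_zero_iff_of_nonneg hp).1 ha.symm
    rw [show a = 0 from ha.symm, zero_mul]
    exact sum_nonneg fun i hi => by simp [hp0 i hi]
  have hb : 0 < b := by
    by_contra! hb
    have hq0 : ∀ i ∈ s, q i = 0 := (sum_eq_zero_iff_of_nonneg hq).1 (hb.antisymm (sum_nonneg hq))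
    exact ha.ne' (sum_eq_zero fun i hi => hpq i hi (hq0 i hi))
  calc a * log (a / b) = ∑ i ∈ s, (p i * log (a / b) + (p i - a / b * q i)) := by
        rw [sum_add_distrib, sum_sub_distrib, ← sum_mul, ← mul_sum]
        field_simp
        ring
    _ ≤ ∑ i ∈ s, p i * log (p i / q i) :=
        sum_le_sum fun i hi =>
          mul_log_add_sub_mul_le_mul_log_div (hp i hi) (hq i hi) (hpq i hi) (by positivity)

section ProbDist

variable {n : ℕ} {P Q : Fin n → ℝ}

lemma cRelEnt_mul_log_two (P Q : Fin n → ℝ) :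
    cRelEnt P Q * log 2 = ∑ i, P i * log (P i / Q i) := by
  rw [cRelEnt, sum_mul]
  refine sum_congr rfl fun i _ => ?_
  rw [logb, mul_assoc, div_mul_cancel₀ _ (log_pos one_lt_two).ne']

theorem cRelEnt_nonneg (hP : IsProbDist P) (hQ : IsProbDist Q)
    (hsupp : ∀ i, Q i = 0 → P i = 0) : 0 ≤ cRelEnt P Q := by
  have h := sum_mul_log_div_sum_le (s := univ) (fun i _ => hP.1 i) (fun i _ => hQ.1 i)
    fun i _ => hsupp i
  rw [hP.2, hQ.2, div_one, log_one, mul_zero, ← cRelEnt_mul_log_two] at h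
  exact nonneg_of_mul_nonneg_left h (log_pos one_lt_two)

theorem mul_sum_filter_le_cRelEnt_add_one (hP : IsProbDist P) (hQ : IsProbDist Q)
    (hsupp : ∀ i, Q i = 0 → P i = 0) (l : ℝ) :
    l * ∑ i with 2 ^ l * Q i < P i, P i ≤ cRelEnt P Q + 1 := by
  have hlog2 : 0 < log 2 := log_pos one_lt_two
  have hlarge : l * log 2 * ∑ i with 2 ^ l * Q i < P i, P i ≤
      ∑ i with 2 ^ l * Q i < P i, P i * log (P i / Q i) := by
    rw [mul_sum]
    refine sum_le_sum fun i hi => ?_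
    replace hi := (mem_filter.1 hi).2
    have hQi : 0 < Q i := (hQ.1 i).lt_of_ne fun h => by simp [← h, hsupp i h.symm] at hi
    have hlog : l * log 2 ≤ log (P i / Q i) := by
      rw [← log_rpow two_pos]
      exact log_le_log (by positivity) ((lt_div_iff₀ hQi).2 hi).le
    rw [mul_comm (P i)]
    exact mul_le_mul_of_nonneg_right hlog (hP.1 i)
  have hsmall : -log 2 ≤ ∑ i with ¬2 ^ l * Q i < P i, P i * log (P i / Q i) :=
    (neg_log_two_le_mul_log_div (sum_nonneg fun i _ => hP.1 i) (sum_nonneg fun i _ => hQ.1 i)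
      (hQ.2 ▸ sum_le_sum_of_subset_of_nonneg (subset_univ _) fun i _ _ => hQ.1 i)).trans
      (sum_mul_log_div_sum_le (fun i _ => hP.1 i) (fun i _ => hQ.1 i) fun i _ => hsupp i)
  have hsplit : (l * ∑ i with 2 ^ l * Q i < P i, P i - 1) * log 2 ≤ cRelEnt P Q * log 2 := by
    rw [cRelEnt_mul_log_two, ← sum_filter_add_sum_filter_not univ fun i => 2 ^ l * Q i < P i]
    linarith
  linarith [le_of_mul_le_mul_right hsplit hlog2]

def condCompl (P : Fin n → ℝ) (t : Finset (Fin n)) : Fin n → ℝ :=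
  fun i => if i ∈ t then 0 else P i / (1 - ∑ j ∈ t, P j)

lemma IsProbDist.sum_compl (hP : IsProbDist P) (t : Finset (Fin n)) :
    ∑ i ∈ tᶜ, P i = 1 - ∑ i ∈ t, P i := by
  rw [← hP.2, ← sum_add_sum_compl t]
  ring

lemma sum_condCompl_compl (t : Finset (Fin n)) :
    ∑ i ∈ tᶜ, condCompl P t i = (∑ i ∈ tᶜ, P i) / (1 - ∑ j ∈ t, P j) := by
  rw [sum_div]
  exact sum_congr rfl fun i hi => if_neg (mem_compl.1 hi)

lemma isProbDist_condCompl (hP : IsProbDist P) {t : Finset (Fin n)} (ht : ∑ j ∈ t, P j < 1) :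
    IsProbDist (condCompl P t) := by
  refine ⟨fun i => ?_, ?_⟩
  · unfold condCompl
    split_ifs
    · exact le_rfl
    · exact div_nonneg (hP.1 i) (sub_pos.2 ht).le
  · rw [← sum_add_sum_compl t, sum_condCompl_compl, hP.sum_compl,
      div_self (sub_pos.2 ht).ne', add_eq_right]
    exact sum_eq_zero fun i hi => if_pos hi

lemma sum_abs_sub_condCompl (hP : IsProbDist P) {t : Finset (Fin n)}
    (ht : ∑ j ∈ t, P j < 1) : ∑ i, |P i - condCompl P t i| = 2 * ∑ j ∈ t, P j := by
  have hm : 0 < 1 - ∑ j ∈ t, P j := sub_pos.2 ht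
  have hin : ∀ i ∈ t, |P i - condCompl P t i| = P i := fun i hi => by
    rw [condCompl, if_pos hi, sub_zero, abs_of_nonneg (hP.1 i)]
  have hout : ∀ i ∈ tᶜ, |P i - condCompl P t i| = condCompl P t i - P i := fun i hi => by
    rw [abs_sub_comm, abs_of_nonneg]
    rw [condCompl, if_neg (mem_compl.1 hi), sub_nonneg]
    exact le_div_self (hP.1 i) hm (sub_le_self _ (sum_nonneg fun j _ => hP.1 j))
  rw [← sum_add_sum_compl t, sum_congr rfl hin, sum_congr rfl hout, sum_sub_distrib,
    sum_condCompl_compl, hP.sum_compl, div_self hm.ne']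
  ring

lemma mul_condCompl_le {t : Finset (Fin n)} {β k : ℝ} (hQ : ∀ i, 0 ≤ Q i) (hβ : 0 ≤ β)
    (ht : ∑ j ∈ t, P j < 1) (hβk : β * k ≤ 1 - ∑ j ∈ t, P j)
    (hPQ : ∀ i ∉ t, P i ≤ k * Q i) (i : Fin n) : β * condCompl P t i ≤ Q i := by
  unfold condCompl
  split_ifs with hi
  · simpa using hQ i
  have hm : 0 < 1 - ∑ j ∈ t, P j := sub_pos.2 ht
  calc β * (P i / (1 - ∑ j ∈ t, P j)) ≤ β * (k * Q i / (1 - ∑ j ∈ t, P j)) := by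
        gcongr
        exact hPQ i hi
    _ = β * k * Q i / (1 - ∑ j ∈ t, P j) := by ring
    _ ≤ (1 - ∑ j ∈ t, P j) * Q i / (1 - ∑ j ∈ t, P j) := by gcongr; exact hQ i
    _ = Q i := by field_simp

theorem exists_isProbDist_eq_mix (hP : IsProbDist P) (hQ : IsProbDist Q) {α : ℝ}
    (hα : α < 1) (hPQ : ∀ i, α * P i ≤ Q i) :
    ∃ R : Fin n → ℝ, IsProbDist R ∧ ∀ i, Q i = α * P i + (1 - α) * R i := by
  have hα' : 0 < 1 - α := sub_pos.2 hα
  refine ⟨fun i => (Q i - α * P i) / (1 - α), ⟨fun i => ?_, ?_⟩, fun i => ?_⟩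
  · exact div_nonneg (sub_nonneg.2 (hPQ i)) hα'.le
  · rw [← sum_div, sum_sub_distrib, ← mul_sum, hP.2, hQ.2, mul_one, div_self hα'.ne']
  · field_simp
    ring

end ProbDist

/-- Classical substate theorem. -/
theorem classical_substate_theorem {n : ℕ} (P Q : Fin n → ℝ)
    (hP : IsProbDist P) (hQ : IsProbDist Q)
    (hsupp : ∀ i, Q i = 0 → P i = 0)
    (c : ℝ) (hc : cRelEnt P Q ≤ c)
    (r : ℝ) (hr : 1 < r)
    (α : ℝ) (hα : α = (r - 1) / (r * (2 : ℝ) ^ (r * (c + 1)))) :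
    ∃ P' P'' : Fin n → ℝ, IsProbDist P' ∧ IsProbDist P'' ∧
      (∑ i, |P i - P' i|) ≤ 2 / r ∧
      ∀ i, Q i = α * P' i + (1 - α) * P'' i := by
  have hr0 : 0 < r := one_pos.trans hr
  have hc0 : 0 ≤ c := (cRelEnt_nonneg hP hQ hsupp).trans hc
  set k : ℝ := 2 ^ (r * (c + 1))
  have hk : 1 ≤ k := one_le_rpow one_le_two (by positivity)
  set t : Finset (Fin n) := {i | k * Q i < P i}
  have hmarkov := mul_sum_filter_le_cRelEnt_add_one hP hQ hsupp (r * (c + 1))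
  have hε : ∑ i ∈ t, P i ≤ 1 / r := by
    rw [le_div_iff₀ hr0]
    nlinarith
  have hε1 : ∑ i ∈ t, P i < 1 := hε.trans_lt ((div_lt_one hr0).2 hr)
  have hαk : α * k = 1 - 1 / r := by
    rw [hα]
    field_simp
  have hα0 : 0 ≤ α := by
    rw [hα]
    positivity
  have hα1 : α < 1 := by
    rw [hα, div_lt_one (by positivity)]
    nlinarith
  have hdom := mul_condCompl_le hQ.1 hα0 hε1 (k := k) (by linarith)
    (fun i hi => not_lt.1 fun h => hi (mem_filter.2 ⟨mem_univ i, h⟩))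
  obtain ⟨P'', hP'', hmix⟩ := exists_isProbDist_eq_mix (isProbDist_condCompl hP hε1) hQ hα1 hdom
  refine ⟨_, P'', isProbDist_condCompl hP hε1, hP'', ?_, hmix⟩
  rw [sum_abs_sub_condCompl hP hε1, ← mul_one_div]
  linarith

end
end

section
/- Classical tail bound for relative entropy: Let P and Q be probability distributions on Fin n with supp(P) ⊆ supp(Q), and let c := S(P‖Q). Then for every real r ≥ 1, the set Bad := {i : P i > 2^{r(c+1)} · Q i} satisfies ∑_{i ∈ Bad} P i < 1/r. -/
open Matrix BigOperators
open scoped ComplexOrder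

noncomputable section

/-- Key pointwise inequality: `x - y ≤ x log(x/y)` under support condition. -/
lemma tail_key_ineq (x y : ℝ) (hx : 0 ≤ x) (hy : 0 ≤ y) (h : y = 0 → x = 0) :
    x - y ≤ x * Real.log (x / y) := by
  rcases eq_or_lt_of_le hx with hx0 | hx0
  · simp [← hx0]; linarith
  · have hy0 : 0 < y := lt_of_le_of_ne hy (fun e => by have := h e.symm; linarith)
    have h1 : Real.log (y / x) ≤ y / x - 1 := Real.log_le_sub_one_of_pos (by positivity)
    have h2 : Real.log (x / y) = - Real.log (y / x) := by
      rw [← Real.log_inv]; congr 1; field_simp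
    have h3 : x * (y / x - 1) = y - x := by field_simp
    nlinarith [mul_le_mul_of_nonneg_left h1 hx0.le]

/-- `s log s ≥ -log 2` for `s > 0`. -/
lemma tail_s_log_s (s : ℝ) (hs : 0 < s) : -Real.log 2 ≤ s * Real.log s := by
  have h1 : Real.log (1 / s) ≤ (1 / s) / Real.exp 1 := by
    have h := Real.log_le_sub_one_of_pos (show 0 < (1 / s) / Real.exp 1 by positivity)
    rw [Real.log_div (by positivity) (Real.exp_ne_zero 1), Real.log_exp] at h
    linarith
  have hls : Real.log s = -Real.log (1 / s) := by rw [one_div, Real.log_inv]; ring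
  have h3 : s * ((1 / s) / Real.exp 1) = 1 / Real.exp 1 := by field_simp
  have h2 : -(1 / Real.exp 1) ≤ s * Real.log s := by
    have := mul_le_mul_of_nonneg_left h1 hs.le
    nlinarith
  have h4 : 1 / Real.exp 1 ≤ Real.log 2 := by
    have he : (2 : ℝ) ≤ Real.exp 1 := by have := Real.add_one_le_exp 1; linarith
    have h5 : 1 / Real.exp 1 ≤ 1 / 2 := by
      apply one_div_le_one_div_of_le <;> linarith
    have hl2 := Real.log_two_gt_d9
    nlinarith
  linarith

/-- Log-sum-type lower bound on a subset. -/
lemma tail_sum_ge {n : ℕ} (P Q : Fin n → ℝ) (S : Finset (Fin n))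
    (hP0 : ∀ i, 0 ≤ P i) (hQ0 : ∀ i, 0 ≤ Q i) (hsupp : ∀ i, Q i = 0 → P i = 0) :
    (∑ i ∈ S, P i) - (∑ i ∈ S, Q i) ≤ ∑ i ∈ S, P i * Real.log (P i / Q i) := by
  rw [← Finset.sum_sub_distrib]
  exact Finset.sum_le_sum fun i _ => tail_key_ineq (P i) (Q i) (hP0 i) (hQ0 i) (hsupp i)

open scoped Classical in
/-- Classical tail bound for relative entropy. -/
theorem classical_tail_bound {n : ℕ} (P Q : Fin n → ℝ)
    (hP : IsProbDist P) (hQ : IsProbDist Q)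
    (hsupp : ∀ i, Q i = 0 → P i = 0)
    (c : ℝ) (hc : c = cRelEnt P Q) (r : ℝ) (hr : 1 ≤ r) :
    ∑ i ∈ Finset.univ.filter (fun i => (2 : ℝ) ^ (r * (c + 1)) * Q i < P i), P i
      < 1 / r := by
  obtain ⟨hP0, hP1⟩ := hP
  obtain ⟨hQ0, hQ1⟩ := hQ
  have hr0 : (0 : ℝ) < r := lt_of_lt_of_le one_pos hr
  have hln2 : (0 : ℝ) < Real.log 2 := Real.log_pos (by norm_num)
  have hconv : ∀ S : Finset (Fin n), ∑ i ∈ S, P i * Real.logb 2 (P i / Q i)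
      = (∑ i ∈ S, P i * Real.log (P i / Q i)) / Real.log 2 := fun S => by
    rw [Finset.sum_div]
    exact Finset.sum_congr rfl fun i _ => by rw [Real.logb, mul_div_assoc]
  -- nonnegativity of c
  have hc0 : 0 ≤ c := by
    rw [hc, cRelEnt, hconv Finset.univ]
    apply div_nonneg _ hln2.le
    have := tail_sum_ge P Q Finset.univ hP0 hQ0 hsupp
    rw [hP1, hQ1] at this; linarith
  set B := Finset.univ.filter (fun i => (2 : ℝ) ^ (r * (c + 1)) * Q i < P i) with hBdef
  set Bc := Finset.univ.filter (fun i => ¬ ((2 : ℝ) ^ (r * (c + 1)) * Q i < P i)) with hBcdef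
  have hsplit : ∀ f : Fin n → ℝ, ∑ i ∈ B, f i + ∑ i ∈ Bc, f i = ∑ i, f i := fun f =>
    Finset.sum_filter_add_sum_filter_not _ _ f
  set p := ∑ i ∈ B, P i with hpdef
  set q := ∑ i ∈ B, Q i with hqdef
  set s := ∑ i ∈ Bc, P i with hsdef
  set t := ∑ i ∈ Bc, Q i with htdef
  have hp0 : 0 ≤ p := Finset.sum_nonneg fun i _ => hP0 i
  have hs0 : 0 ≤ s := Finset.sum_nonneg fun i _ => hP0 i
  have hq0 : 0 ≤ q := Finset.sum_nonneg fun i _ => hQ0 i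
  have ht0 : 0 ≤ t := Finset.sum_nonneg fun i _ => hQ0 i
  have hqt : q + t = 1 := by rw [hqdef, htdef, hsplit Q]; exact hQ1
  have ht1 : t ≤ 1 := by linarith
  -- complement bound (in natural log)
  have hcomp : -Real.log 2 ≤ ∑ i ∈ Bc, P i * Real.log (P i / Q i) := by
    rcases eq_or_lt_of_le hs0 with hs | hs
    · have hz : ∀ i ∈ Bc, P i = 0 :=
        (Finset.sum_eq_zero_iff_of_nonneg (fun i _ => hP0 i)).mp hs.symm
      have hzz : ∑ i ∈ Bc, P i * Real.log (P i / Q i) = 0 :=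
        Finset.sum_eq_zero fun i hi => by rw [hz i hi, zero_mul]
      rw [hzz]; linarith
    · have ht : 0 < t := by
        rcases eq_or_lt_of_le ht0 with h | h
        · exfalso
          have hz : ∀ i ∈ Bc, Q i = 0 :=
            (Finset.sum_eq_zero_iff_of_nonneg (fun i _ => hQ0 i)).mp h.symm
          have : s = 0 := Finset.sum_eq_zero fun i hi => hsupp i (hz i hi)
          linarith
        · exact h
      have key := tail_sum_ge P (fun i => Q i * (s / t)) Bc hP0
          (fun i => mul_nonneg (hQ0 i) (by positivity))
          (fun i h => hsupp i (by
            rcases mul_eq_zero.mp h with h | h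
            · exact h
            · exfalso
              have hne : s / t ≠ 0 := by positivity
              exact hne h))
      have hsum : ∑ i ∈ Bc, Q i * (s / t) = s := by
        rw [← Finset.sum_mul, ← htdef]; field_simp
      rw [hsum] at key
      have hdecomp : ∀ i ∈ Bc, P i * Real.log (P i / (Q i * (s / t)))
          = P i * Real.log (P i / Q i) - P i * Real.log (s / t) := by
        intro i hi
        rcases eq_or_lt_of_le (hP0 i) with h0 | h0
        · rw [← h0]; ring
        · have hQi : 0 < Q i :=
            lt_of_le_of_ne (hQ0 i) (fun e => by have := hsupp i e.symm; linarith)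
          rw [div_mul_eq_div_div, Real.log_div (by positivity) (by positivity)]
          ring
      rw [Finset.sum_congr rfl hdecomp, Finset.sum_sub_distrib, ← Finset.sum_mul] at key
      have h1 : s * Real.log (s / t) = s * Real.log s - s * Real.log t := by
        rw [Real.log_div (ne_of_gt hs) (ne_of_gt ht)]; ring
      have h2 : Real.log t ≤ 0 := Real.log_nonpos ht0 ht1
      have h3 := tail_s_log_s s hs
      nlinarith [mul_nonneg hs.le (neg_nonneg.mpr h2)]
  -- bound on the bad set
  have hBlog : ∀ i ∈ B, 0 < P i → r * (c + 1) < Real.logb 2 (P i / Q i) := by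
    intro i hi h0
    have hmem := Finset.mem_filter.mp hi
    have hQi : 0 < Q i :=
      lt_of_le_of_ne (hQ0 i) (fun e => by have := hsupp i e.symm; linarith)
    have hlt : (2 : ℝ) ^ (r * (c + 1)) < P i / Q i := (lt_div_iff₀ hQi).mpr hmem.2
    have hlb := Real.logb_lt_logb (b := 2) one_lt_two
      (Real.rpow_pos_of_pos two_pos _) hlt
    rwa [Real.logb_rpow (by norm_num) (by norm_num)] at hlb
  have hBle : ∀ i ∈ B, P i * (r * (c + 1)) ≤ P i * Real.logb 2 (P i / Q i) := by
    intro i hi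
    rcases eq_or_lt_of_le (hP0 i) with h0 | h0
    · rw [← h0]; simp
    · exact mul_le_mul_of_nonneg_left (hBlog i hi h0).le (hP0 i)
  rcases eq_or_lt_of_le hp0 with hp | hp
  · rw [← hp]; positivity
  · obtain ⟨i0, hi0, hPi0⟩ : ∃ i ∈ B, 0 < P i := by
      by_contra h
      push_neg at h
      have : p = 0 := Finset.sum_eq_zero fun i hi => le_antisymm (h i hi) (hP0 i)
      linarith
    have hstrict : p * (r * (c + 1)) < ∑ i ∈ B, P i * Real.logb 2 (P i / Q i) := by
      have hslt := Finset.sum_lt_sum hBle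
        ⟨i0, hi0, mul_lt_mul_of_pos_left (hBlog i0 hi0 hPi0) hPi0⟩
      have heq2 : p * (r * (c + 1)) = ∑ i ∈ B, P i * (r * (c + 1)) := by
        rw [hpdef, Finset.sum_mul]
      linarith
    have hBc_logb : -1 ≤ ∑ i ∈ Bc, P i * Real.logb 2 (P i / Q i) := by
      rw [hconv Bc, le_div_iff₀ hln2]; linarith
    have hcsplit : c = (∑ i ∈ B, P i * Real.logb 2 (P i / Q i))
        + ∑ i ∈ Bc, P i * Real.logb 2 (P i / Q i) := by
      rw [hc, cRelEnt]; exact (hsplit _).symm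
    have hmain : p * (r * (c + 1)) < c + 1 := by linarith
    have hrc : 0 < r * (c + 1) := by nlinarith
    have hlt2 : p < (c + 1) / (r * (c + 1)) := (lt_div_iff₀ hrc).mpr hmain
    have hc1 : c + 1 ≠ 0 := by linarith
    have heq : (c + 1) / (r * (c + 1)) = 1 / r := by
      rw [mul_comm r (c + 1), ← div_div, div_self hc1]
    rw [heq] at hlt2
    exact hlt2


end
end

section
/- Classical substate property from observational divergence: Let P and Q be probability distributions on Fin n with supp(P) ⊆ supp(Q), and let k := D(P‖Q). Then for every real r ≥ 1 there exists a probability distribution P' on Fin n such that ‖P − P'‖₁ ≤ 2/r and for every i, ((r−1)/(r·2^{r·k})) · P' i ≤ Q i. -/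
open Matrix BigOperators
open scoped ComplexOrder

noncomputable section

private lemma obsSet_nonempty_bdd {n : ℕ} (P Q : Fin n → ℝ)
    (hP : IsProbDist P) (hQ : IsProbDist Q)
    (hsupp : ∀ i, Q i = 0 → P i = 0) :
    (0 : ℝ) ∈ {x : ℝ | ∃ f : Fin n → ℝ, (∀ i, 0 ≤ f i ∧ f i ≤ 1) ∧
      (∑ i, f i * Q i) ≠ 0 ∧
      x = (∑ i, f i * P i) * Real.logb 2 ((∑ i, f i * P i) / (∑ i, f i * Q i))} ∧
    BddAbove {x : ℝ | ∃ f : Fin n → ℝ, (∀ i, 0 ≤ f i ∧ f i ≤ 1) ∧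
      (∑ i, f i * Q i) ≠ 0 ∧
      x = (∑ i, f i * P i) * Real.logb 2 ((∑ i, f i * P i) / (∑ i, f i * Q i))} := by
  constructor
  · refine ⟨fun _ => 1, fun i => ⟨zero_le_one, le_refl 1⟩, ?_, ?_⟩ <;>
      simp [hP.2, hQ.2]
  · set M : ℝ := ∑ i, (if Q i = 0 then 0 else P i / Q i) with hM
    have hPM : ∀ i, P i ≤ M * Q i := by
      intro i
      by_cases h : Q i = 0
      · simp [hsupp i h, h]
      · have hQi : 0 < Q i := lt_of_le_of_ne (hQ.1 i) (Ne.symm h)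
        have hle : (if Q i = 0 then 0 else P i / Q i) ≤ M := by
          refine Finset.single_le_sum
            (f := fun j => if Q j = 0 then 0 else P j / Q j) (fun j _ => ?_)
            (Finset.mem_univ i)
          by_cases hj : Q j = 0
          · simp [hj]
          · simp only [hj, if_false]
            exact div_nonneg (hP.1 j) (hQ.1 j)
        rw [if_neg h] at hle
        exact (div_le_iff₀ hQi).mp hle
    refine ⟨max 0 (Real.logb 2 M), ?_⟩
    rintro x ⟨f, hf, hy, rfl⟩
    set X := ∑ i, f i * P i with hX
    set Y := ∑ i, f i * Q i with hY
    have h0Y : 0 ≤ Y := Finset.sum_nonneg fun i _ => mul_nonneg (hf i).1 (hQ.1 i)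
    have hYpos : 0 < Y := lt_of_le_of_ne h0Y (Ne.symm hy)
    have h0X : 0 ≤ X := Finset.sum_nonneg fun i _ => mul_nonneg (hf i).1 (hP.1 i)
    have hX1 : X ≤ 1 := by
      calc X ≤ ∑ i, P i :=
            Finset.sum_le_sum fun i _ => mul_le_of_le_one_left (hP.1 i) (hf i).2
        _ = 1 := hP.2
    have hXM : X ≤ M * Y := by
      calc X ≤ ∑ i, M * (f i * Q i) := by
            refine Finset.sum_le_sum fun i _ => ?_
            have := mul_le_mul_of_nonneg_left (hPM i) (hf i).1
            linarith [this, mul_comm (f i) (M * Q i)]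
        _ = M * Y := by rw [hY, Finset.mul_sum]
    rcases eq_or_lt_of_le h0X with hX0 | hXpos
    · simp [← hX0]
    · by_cases hl : Real.logb 2 (X / Y) ≤ 0
      · have : X * Real.logb 2 (X / Y) ≤ 0 := mul_nonpos_of_nonneg_of_nonpos h0X hl
        exact this.trans (le_max_left 0 _)
      · push_neg at hl
        have hdiv : X / Y ≤ M := (div_le_iff₀ hYpos).mpr hXM
        have h1 : X * Real.logb 2 (X / Y) ≤ Real.logb 2 (X / Y) :=
          mul_le_of_le_one_left hl.le hX1
        have h2 : Real.logb 2 (X / Y) ≤ Real.logb 2 M :=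
          Real.logb_le_logb_of_le (by norm_num) (div_pos hXpos hYpos) hdiv
        exact (h1.trans h2).trans (le_max_right 0 _)


/-- Classical substate property from observational divergence. -/
theorem classical_substate_from_obsDiv {n : ℕ} (P Q : Fin n → ℝ)
    (hP : IsProbDist P) (hQ : IsProbDist Q)
    (hsupp : ∀ i, Q i = 0 → P i = 0)
    (k : ℝ) (hk : k = cObsDiv P Q)
    (r : ℝ) (hr : 1 ≤ r) :
    ∃ P' : Fin n → ℝ, IsProbDist P' ∧
      (∑ i, |P i - P' i|) ≤ 2 / r ∧
      ∀ i, ((r - 1) / (r * (2 : ℝ) ^ (r * k))) * P' i ≤ Q i := by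
  classical
  -- trivial case r = 1
  rcases eq_or_lt_of_le hr with hr1 | hr1
  · refine ⟨P, hP, by simp [← hr1], fun i => ?_⟩
    simp [← hr1, hQ.1 i]
  obtain ⟨h0mem, hbdd⟩ := obsSet_nonempty_bdd P Q hP hQ hsupp
  have hrpos : (0 : ℝ) < r := by linarith
  have hk0 : 0 ≤ k := by
    rw [hk, cObsDiv]
    exact le_csSup hbdd h0mem
  set c : ℝ := (2 : ℝ) ^ (r * k) with hc
  have hcpos : 0 < c := Real.rpow_pos_of_pos (by norm_num) _
  set pred : Fin n → Prop := fun i => c * Q i < P i with hpred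
  set B : Finset (Fin n) := Finset.univ.filter pred with hB
  set p : ℝ := ∑ i ∈ B, P i with hp
  have hp0 : 0 ≤ p := Finset.sum_nonneg fun i _ => hP.1 i
  -- the key claim: p ≤ 1/r
  have hple : p ≤ 1 / r := by
    by_contra hcon
    push_neg at hcon
    have hppos : 0 < p := lt_trans (by positivity) hcon
    have hBne : B.Nonempty := by
      rcases Finset.eq_empty_or_nonempty B with h | h
      · rw [hp, h, Finset.sum_empty] at hppos; exact absurd hppos (lt_irrefl 0)
      · exact h
    set q : ℝ := ∑ i ∈ B, Q i with hq
    have hq0 : 0 ≤ q := Finset.sum_nonneg fun i _ => hQ.1 i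
    have hqlt : c * q < p := by
      rw [hq, Finset.mul_sum, hp]
      refine Finset.sum_lt_sum_of_nonempty hBne fun i hi => ?_
      exact (Finset.mem_filter.mp hi).2
    have hqpos : 0 < q := by
      rcases eq_or_lt_of_le hq0 with h | h
      · exfalso
        have hzero : ∀ i ∈ B, Q i = 0 :=
          (Finset.sum_eq_zero_iff_of_nonneg fun i _ => hQ.1 i).mp h.symm
        have : p = 0 := Finset.sum_eq_zero fun i hi => hsupp i (hzero i hi)
        rw [this] at hppos; exact absurd hppos (lt_irrefl 0)
      · exact h
    have hmem : p * Real.logb 2 (p / q) ∈ {x : ℝ | ∃ f : Fin n → ℝ,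
        (∀ i, 0 ≤ f i ∧ f i ≤ 1) ∧ (∑ i, f i * Q i) ≠ 0 ∧
        x = (∑ i, f i * P i) * Real.logb 2 ((∑ i, f i * P i) / (∑ i, f i * Q i))} := by
      have key : ∀ g : Fin n → ℝ, (∑ i, (if pred i then (1:ℝ) else 0) * g i)
          = ∑ i ∈ B, g i := by
        intro g
        rw [hB, Finset.sum_filter]
        refine Finset.sum_congr rfl fun i _ => ?_
        by_cases h : pred i
        · rw [if_pos h, if_pos h, one_mul]
        · rw [if_neg h, if_neg h, zero_mul]
      refine ⟨fun i => if pred i then 1 else 0, fun i => ?_, ?_, ?_⟩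
      · dsimp only
        by_cases h : pred i
        · rw [if_pos h]; exact ⟨zero_le_one, le_refl 1⟩
        · rw [if_neg h]; exact ⟨le_refl 0, zero_le_one⟩
      · rw [key Q]; exact ne_of_gt hqpos
      · rw [key Q, key P]
    have hvk : p * Real.logb 2 (p / q) ≤ k := by
      rw [hk, cObsDiv]; exact le_csSup hbdd hmem
    have hratio : c < p / q := (lt_div_iff₀ hqpos).mpr (by linarith [hqlt, mul_comm c q])
    have hlogc : Real.logb 2 c = r * k := Real.logb_rpow (by norm_num) (by norm_num)
    have hlog : r * k < Real.logb 2 (p / q) := by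
      rw [← hlogc]
      exact Real.logb_lt_logb (by norm_num) hcpos hratio
    have hrk0 : 0 ≤ r * k := mul_nonneg hrpos.le hk0
    have h1 : k < p * Real.logb 2 (p / q) := by
      have ha : p * (r * k) < p * Real.logb 2 (p / q) :=
        mul_lt_mul_of_pos_left hlog hppos
      have hb2 : k ≤ p * (r * k) := by
        have : 1 / r * (r * k) ≤ p * (r * k) :=
          mul_le_mul_of_nonneg_right hcon.le hrk0
        have he : 1 / r * (r * k) = k := by field_simp
        linarith [he ▸ this]
      linarith
    linarith
  -- construct P'
  set s : ℝ := 1 - p with hs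
  have hrinv : 1 / r < 1 := by
    rw [div_lt_one hrpos]; exact hr1
  have hspos : 0 < s := by rw [hs]; linarith
  have hsle1 : s ≤ 1 := by rw [hs]; linarith
  set P' : Fin n → ℝ := fun i => if pred i then 0 else P i / s with hP'
  have hsumsplit : p + ∑ i ∈ Finset.univ.filter (fun i => ¬ pred i), P i = 1 := by
    rw [hp, hB, Finset.sum_filter_add_sum_filter_not]
    exact hP.2
  have htsum : ∑ i ∈ Finset.univ.filter (fun i => ¬ pred i), P i = s := by
    rw [hs]; linarith
  have hP'dist : IsProbDist P' := by
    constructor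
    · intro i
      by_cases h : pred i <;> simp [hP', h]
      exact div_nonneg (hP.1 i) hspos.le
    · rw [← Finset.sum_filter_add_sum_filter_not Finset.univ pred P']
      have e1 : ∑ i ∈ Finset.univ.filter pred, P' i = 0 :=
        Finset.sum_eq_zero fun i hi => by
          simp [hP', (Finset.mem_filter.mp hi).2]
      have e2 : ∑ i ∈ Finset.univ.filter (fun i => ¬ pred i), P' i = 1 := by
        have : ∀ i ∈ Finset.univ.filter (fun i => ¬ pred i), P' i = P i / s :=
          fun i hi => by simp [hP', (Finset.mem_filter.mp hi).2]
        rw [Finset.sum_congr rfl this, ← Finset.sum_div, htsum, div_self hspos.ne']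
      rw [e1, e2, zero_add]
  refine ⟨P', hP'dist, ?_, ?_⟩
  · -- ℓ1 distance
    have : ∑ i, |P i - P' i| = 2 * p := by
      rw [← Finset.sum_filter_add_sum_filter_not Finset.univ pred (fun i => |P i - P' i|)]
      have e1 : ∑ i ∈ Finset.univ.filter pred, |P i - P' i| = p := by
        rw [hp]
        refine Finset.sum_congr rfl fun i hi => ?_
        simp [hP', (Finset.mem_filter.mp hi).2, abs_of_nonneg (hP.1 i)]
      have e2 : ∑ i ∈ Finset.univ.filter (fun i => ¬ pred i), |P i - P' i| = p := by
        have hterm : ∀ i ∈ Finset.univ.filter (fun i => ¬ pred i),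
            |P i - P' i| = P i / s - P i := by
          intro i hi
          have hni := (Finset.mem_filter.mp hi).2
          have hge : P i ≤ P i / s := by
            rw [le_div_iff₀ hspos]
            nlinarith [hP.1 i]
          simp only [hP', hni, if_false]
          rw [abs_of_nonpos (by linarith)]
          ring
        rw [Finset.sum_congr rfl hterm, Finset.sum_sub_distrib, ← Finset.sum_div,
          htsum, div_self hspos.ne']
        rw [hs]; ring
      rw [e1, e2]; ring
    rw [this]
    rw [div_eq_mul_inv, ← one_div]
    nlinarith
  · -- pointwise bound
    intro i
    by_cases h : pred i
    · simp [hP', h]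
      exact hQ.1 i
    · have hPle : P i ≤ c * Q i := not_lt.mp h
      have hP'i : P' i = P i / s := by simp [hP', h]
      rw [hP'i]
      have hrp : r * p ≤ 1 := by
        have h2 := mul_le_mul_of_nonneg_left hple hrpos.le
        rwa [mul_one_div, div_self hrpos.ne'] at h2
      have hrs : r - 1 ≤ r * s := by rw [hs]; nlinarith
      have hkey : (r - 1) * P i ≤ r * c * s * Q i := by
        have h1 : (r - 1) * P i ≤ (r - 1) * (c * Q i) :=
          mul_le_mul_of_nonneg_left hPle (by linarith)
        have h2 : (r - 1) * (c * Q i) ≤ r * s * (c * Q i) :=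
          mul_le_mul_of_nonneg_right hrs (mul_nonneg hcpos.le (hQ.1 i))
        nlinarith [h1, h2]
      rw [div_mul_div_comm, div_le_iff₀ (by positivity : 0 < r * c * s)]
      calc (r - 1) * P i ≤ r * c * s * Q i := hkey
        _ = Q i * (r * c * s) := by ring


end
end

section
/- Converse to the substate theorem: Let ρ and σ be quantum states on ℂ^n and let k ≥ 0 be a real number. Suppose that for every real r ≥ 1 there exists a quantum state ρ' on ℂ^n such that ‖ρ − ρ'‖₁ ≤ 2/r and σ − ((r−1)/(r·2^{r·k}))·ρ' is positive semidefinite. Then for every POVM element F on ℂ^n with Tr(Fσ) ≠ 0, Tr(Fρ) · logb 2 (Tr(Fρ)/Tr(Fσ)) ≤ 2k + 2; that is, D(ρ‖σ) ≤ 2k + 2. -/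
open Matrix BigOperators
open scoped ComplexOrder

noncomputable section

/-! In the eigenbasis of a traceless Hermitian `A` the diagonal of a POVM element lies in
`[0, 1]`, so `Tr(F A)` is at most the sum of the positive eigenvalues of `A`, which is `‖A‖₁ / 2`.
Hence, for `p = Tr(Fρ) > 0` and `r = 2 / p`, the state `ρ'` supplied by the hypothesis has
`Tr(Fρ') ≥ p / 2`, and `σ ≥ c ρ'` with `c = (r - 1) / (r 2^{rk}) ≥ 2^{-1-rk}` gives
`Tr(Fσ) ≥ p 2^{-2-rk}`. Therefore `p logb 2 (p / Tr(Fσ)) ≤ p (2 + rk) = 2p + 2k ≤ 2k + 2`. -/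

lemma sum_mul_le_half_sum_abs {ι : Type*} (s : Finset ι) {g v : ι → ℝ}
    (hg : ∀ i ∈ s, g i ∈ Set.Icc 0 1) (hv : ∑ i ∈ s, v i = 0) :
    ∑ i ∈ s, g i * v i ≤ (∑ i ∈ s, |v i|) / 2 :=
  calc ∑ i ∈ s, g i * v i ≤ ∑ i ∈ s, (|v i| + v i) / 2 := by
        refine Finset.sum_le_sum fun i hi => ?_
        obtain ⟨h0, h1⟩ := hg i hi
        cases abs_cases (v i) <;> nlinarith
    _ = (∑ i ∈ s, |v i|) / 2 := by rw [← Finset.sum_div, Finset.sum_add_distrib, hv, add_zero]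

lemma mul_logb_div_le_of_le {p q k : ℝ} (hp : 0 < p) (hp1 : p ≤ 1)
    (hq : p / 2 ^ (2 + 2 / p * k) ≤ q) : p * Real.logb 2 (p / q) ≤ 2 * k + 2 := by
  have hq0 : 0 < q := (by positivity : 0 < p / 2 ^ (2 + 2 / p * k)).trans_le hq
  have hlog : Real.logb 2 (p / q) ≤ 2 + 2 / p * k := by
    rw [Real.logb_le_iff_le_rpow one_lt_two (by positivity), div_le_iff₀ hq0]
    rwa [div_le_iff₀ (by positivity), mul_comm] at hq
  calc p * Real.logb 2 (p / q) ≤ p * (2 + 2 / p * k) := mul_le_mul_of_nonneg_left hlog hp.le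
    _ = 2 * p + 2 * k := by field_simp
    _ ≤ 2 * k + 2 := by linarith

variable {d : Type*} [Fintype d]

lemma trR_sub (F A B : Matrix d d ℂ) :
    trR F (A - B) = trR F A - trR F B := by
  simp only [trR, mul_sub, trace_sub, Complex.sub_re]

lemma trR_real_smul (F A : Matrix d d ℂ) (c : ℝ) :
    trR F ((c : ℂ) • A) = c * trR F A := by
  simp only [trR, Matrix.mul_smul, trace_smul, smul_eq_mul, Complex.re_ofReal_mul]

variable [DecidableEq d]

open scoped MatrixOrder in
lemma Matrix.PosSemidef.trR_nonneg {A B : Matrix d d ℂ}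
    (hA : A.PosSemidef) (hB : B.PosSemidef) : 0 ≤ trR A B := by
  obtain ⟨C, rfl⟩ := CStarAlgebra.nonneg_iff_eq_star_mul_self.mp hA.nonneg
  rw [trR, mul_assoc, trace_mul_comm]
  exact (Complex.nonneg_iff.mp (hB.mul_mul_conjTranspose_same C).trace_nonneg).1

lemma trR_smul_le_of_posSemidef_sub {F σ ρ : Matrix d d ℂ} {c : ℝ}
    (hF : F.PosSemidef) (h : (σ - (c : ℂ) • ρ).PosSemidef) : c * trR F ρ ≤ trR F σ := by
  have := hF.trR_nonneg h
  rw [trR_sub, trR_real_smul] at this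
  linarith

lemma Matrix.IsHermitian.trR_eq_sum_re_diag_mul_eigenvalues {A : Matrix d d ℂ}
    (hA : A.IsHermitian) (F : Matrix d d ℂ) :
    trR F A = ∑ i,
      ((star (hA.eigenvectorUnitary : Matrix d d ℂ) * F * hA.eigenvectorUnitary) i i).re *
        hA.eigenvalues i := by
  conv_lhs => rw [hA.spectral_theorem, Unitary.conjStarAlgAut_apply]
  rw [trR, ← mul_assoc, ← mul_assoc, trace_mul_cycle, ← mul_assoc, trace, Complex.re_sum]
  simp only [diag_apply, mul_diagonal, Function.comp_apply]
  exact Finset.sum_congr rfl fun i _ => Complex.re_mul_ofReal _ _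

variable {F : Matrix d d ℂ}

lemma IsPOVMElem.star_mul_mul_of_mem_unitaryGroup (hF : IsPOVMElem F) {U : Matrix d d ℂ}
    (hU : U ∈ unitaryGroup d ℂ) : IsPOVMElem (star U * F * U) := by
  refine ⟨hF.1.conjTranspose_mul_mul_same U, ?_⟩
  have : 1 - star U * F * U = star U * (1 - F) * U := by
    rw [mul_sub, mul_one, sub_mul, (Matrix.mem_unitaryGroup_iff').mp hU]
  exact this ▸ hF.2.conjTranspose_mul_mul_same U

lemma IsPOVMElem.re_diag_mem_Icc (hF : IsPOVMElem F) (i : d) : (F i i).re ∈ Set.Icc 0 1 := by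
  have h0 := (Complex.nonneg_iff.mp (hF.1.diag_nonneg (i := i))).1
  have h1 := (Complex.nonneg_iff.mp (hF.2.diag_nonneg (i := i))).1
  simp only [Matrix.sub_apply, one_apply_eq, Complex.sub_re, Complex.one_re] at h1
  exact ⟨h0, by linarith⟩

lemma IsPOVMElem.trR_le_half_traceNorm (hF : IsPOVMElem F) {A : Matrix d d ℂ}
    (hA : A.IsHermitian) (htr : A.trace = 0) : trR F A ≤ traceNorm A / 2 := by
  have hsum : ∑ i, hA.eigenvalues i = 0 := by
    simpa using congrArg Complex.re (hA.trace_eq_sum_eigenvalues.symm.trans htr)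
  rw [hA.trR_eq_sum_re_diag_mul_eigenvalues, traceNorm, dif_pos hA]
  exact sum_mul_le_half_sum_abs _ (fun i _ =>
    (hF.star_mul_mul_of_mem_unitaryGroup hA.eigenvectorUnitary.2).re_diag_mem_Icc i) hsum

lemma IsPOVMElem.trR_le_add_half_traceNorm (hF : IsPOVMElem F) {ρ ρ' : Matrix d d ℂ}
    (hρ : IsState ρ) (hρ' : IsState ρ') :
    trR F ρ ≤ trR F ρ' + traceNorm (ρ - ρ') / 2 := by
  have := hF.trR_le_half_traceNorm (hρ.1.1.sub hρ'.1.1)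
    (by rw [trace_sub, hρ.2, hρ'.2, sub_self])
  rw [trR_sub] at this
  linarith

lemma IsPOVMElem.trR_le_one (hF : IsPOVMElem F) {ρ : Matrix d d ℂ} (hρ : IsState ρ) :
    trR F ρ ≤ 1 := by
  have := hF.2.trR_nonneg hρ.1
  simp only [trR, sub_mul, one_mul, trace_sub, hρ.2, Complex.sub_re, Complex.one_re] at this
  exact sub_nonneg.mp this

end

theorem substate_converse_general {n : ℕ} (ρ σ : Matrix (Fin n) (Fin n) ℂ)
    (hρ : IsState ρ) (k : ℝ) (hk : 0 ≤ k)
    (h : ∀ r : ℝ, 1 ≤ r → ∃ ρ' : Matrix (Fin n) (Fin n) ℂ, IsState ρ' ∧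
      traceNorm (ρ - ρ') ≤ 2 / r ∧
      (σ - (((r - 1) / (r * (2 : ℝ) ^ (r * k)) : ℝ) : ℂ) • ρ').PosSemidef) :
    ∀ F : Matrix (Fin n) (Fin n) ℂ, IsPOVMElem F → trR F σ ≠ 0 →
      trR F ρ * Real.logb 2 (trR F ρ / trR F σ) ≤ 2 * k + 2 := by
  intro F hF _
  obtain hp0 | hp := (hF.1.trR_nonneg hρ.1).eq_or_lt
  · rw [← hp0, zero_mul]
    linarith
  set p := trR F ρ
  have hr : 2 ≤ 2 / p := by
    rw [le_div_iff₀ hp]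
    linarith [hF.trR_le_one hρ]
  obtain ⟨ρ', hρ', hnorm, hdom⟩ := h (2 / p) (by linarith)
  have hp' : p / 2 ≤ trR F ρ' := by
    rw [div_div_cancel₀ two_ne_zero] at hnorm
    linarith [hF.trR_le_add_half_traceNorm hρ hρ']
  have hc : 1 / (2 * 2 ^ (2 / p * k)) ≤ (2 / p - 1) / (2 / p * 2 ^ (2 / p * k)) := by
    rw [div_le_div_iff₀ (by positivity) (by positivity)]
    nlinarith [Real.rpow_pos_of_pos two_pos (2 / p * k)]
  refine mul_logb_div_le_of_le hp (hF.trR_le_one hρ) ?_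
  calc p / 2 ^ (2 + 2 / p * k) = 1 / (2 * 2 ^ (2 / p * k)) * (p / 2) := by
        rw [Real.rpow_add two_pos, Real.rpow_two]
        ring
    _ ≤ (2 / p - 1) / (2 / p * 2 ^ (2 / p * k)) * trR F ρ' :=
        mul_le_mul hc hp' (by positivity) ((by positivity : (0 : ℝ) ≤ _).trans hc)
    _ ≤ trR F σ := trR_smul_le_of_posSemidef_sub hF.1 hdom

/-- Converse to the substate theorem. -/
theorem substate_converse {n : ℕ} (ρ σ : Matrix (Fin n) (Fin n) ℂ)
    (hρ : IsState ρ) (hσ : IsState σ) (k : ℝ) (hk : 0 ≤ k)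
    (h : ∀ r : ℝ, 1 ≤ r → ∃ ρ' : Matrix (Fin n) (Fin n) ℂ, IsState ρ' ∧
      traceNorm (ρ - ρ') ≤ 2 / r ∧
      (σ - (((r - 1) / (r * (2 : ℝ) ^ (r * k)) : ℝ) : ℂ) • ρ').PosSemidef) :
    ∀ F : Matrix (Fin n) (Fin n) ℂ, IsPOVMElem F → trR F σ ≠ 0 →
      trR F ρ * Real.logb 2 (trR F ρ / trR F σ) ≤ 2 * k + 2 :=
  substate_converse_general ρ σ hρ k hk h
end

section
/- Strong substate property bounds relative entropy: Let ρ and σ be quantum states on ℂ^n and let k be a real number. If the matrix σ − 2^{−k}·ρ is positive semidefinite (i.e., ρ/2^k ≤ σ in the Loewner order), then supp(ρ) ⊆ supp(σ) and S(ρ‖σ) ≤ k. -/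
open Matrix BigOperators
open scoped ComplexOrder

noncomputable section

/-! Write `ρ = ∑ pᵢ |uᵢ⟩⟨uᵢ|`, `σ = ∑ μⱼ |vⱼ⟩⟨vⱼ|` and `aᵢⱼ = |⟨uᵢ, vⱼ⟩|²`, whose rows sum
to `1`; then `S(ρ‖σ) = ∑ᵢ pᵢ (log pᵢ - ∑ⱼ aᵢⱼ log μⱼ)`. Put `c = 2^(-k)`. Testing `σ - c ρ ≥ 0`
on `vⱼ` shows `aᵢⱼ = 0` whenever `pᵢ > 0 = μⱼ`, and testing it on `w = ∑ⱼ (⟨vⱼ, uᵢ⟩ / μⱼ) vⱼ`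
gives `c pᵢ qᵢ² ≤ qᵢ` for `qᵢ = ∑ⱼ aᵢⱼ / μⱼ`. Summing `log x ≤ x - 1` at `x = c pᵢ / μⱼ` with
weights `aᵢⱼ` turns this into `log (c pᵢ) ≤ ∑ⱼ aᵢⱼ log μⱼ`, hence
`S(ρ‖σ) ≤ -log c = k log 2 ≤ k`; here `k ≥ 0` because `c = c Tr ρ ≤ Tr σ = 1`. -/

open Complex (normSq)

namespace Real

lemma sum_div_pos_of_sum_eq_one {ι : Type*} [Fintype ι] {a μ : ι → ℝ} (ha : 0 ≤ a) (hμ : 0 ≤ μ)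
    (hsupp : ∀ j, μ j = 0 → a j = 0) (hsum : ∑ j, a j = 1) : 0 < ∑ j, a j / μ j := by
  obtain ⟨j, -, hj⟩ := Finset.exists_ne_zero_of_sum_ne_zero (hsum ▸ one_ne_zero)
  have hμj : 0 < μ j := (hμ j).lt_of_ne' fun h => hj (hsupp j h)
  exact Finset.sum_pos' (fun j _ => div_nonneg (ha j) (hμ j))
    ⟨j, Finset.mem_univ j, div_pos ((ha j).lt_of_ne' hj) hμj⟩

/-- Terms with `μ j = 0` are harmless because of the conventions `a / 0 = 0` and `log 0 = 0`
together with `a j = 0` there. -/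
lemma log_le_sum_mul_log {ι : Type*} [Fintype ι] {a μ : ι → ℝ} {t : ℝ} (ha : 0 ≤ a)
    (hμ : 0 ≤ μ) (hsupp : ∀ j, μ j = 0 → a j = 0) (hsum : ∑ j, a j = 1) (ht : 0 < t)
    (htq : t * ∑ j, a j / μ j ≤ 1) : log t ≤ ∑ j, a j * log (μ j) := by
  have hterm : ∀ j, a j * (log t + 1) - t * (a j / μ j) ≤ a j * log (μ j) := by
    intro j
    rcases (hμ j).eq_or_lt' with hμj | hμj
    · simp [hμj, hsupp j hμj]
    · have := log_le_sub_one_of_pos (div_pos ht hμj)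
      rw [log_div ht.ne' hμj.ne'] at this
      calc a j * (log t + 1) - t * (a j / μ j) = a j * (log t + 1 - t / μ j) := by ring
        _ ≤ a j * log (μ j) := mul_le_mul_of_nonneg_left (by linarith) (ha j)
  calc log t ≤ log t + 1 - t * ∑ j, a j / μ j := by linarith
    _ = ∑ j, (a j * (log t + 1) - t * (a j / μ j)) := by
      rw [Finset.sum_sub_distrib, ← Finset.sum_mul, hsum, ← Finset.mul_sum, one_mul]
    _ ≤ ∑ j, a j * log (μ j) := Finset.sum_le_sum fun j _ => hterm j

end Real

section

variable {d : Type*} [Fintype d]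

lemma suppLE_of_posSemidef_sub_smul {ρ σ : Matrix d d ℂ} {c : ℝ} (hρ : ρ.PosSemidef) (hc : 0 < c)
    (h : (σ - (c : ℂ) • ρ).PosSemidef) : SuppLE ρ σ := by
  intro v hv
  rw [← hρ.dotProduct_mulVec_zero_iff]
  have h1 := h.dotProduct_mulVec_nonneg v
  rw [sub_mulVec, hv, smul_mulVec, zero_sub, dotProduct_neg, dotProduct_smul, smul_eq_mul,
    neg_nonneg] at h1
  refine le_antisymm ?_ (hρ.dotProduct_mulVec_nonneg v)
  have hc' : (0 : ℂ) ≤ (c⁻¹ : ℝ) := by exact_mod_cast (inv_pos.mpr hc).le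
  calc star v ⬝ᵥ ρ *ᵥ v = ((c⁻¹ : ℝ) : ℂ) * ((c : ℂ) * (star v ⬝ᵥ ρ *ᵥ v)) := by
        push_cast; field_simp
    _ ≤ 0 := mul_nonpos_of_nonneg_of_nonpos hc' h1

lemma Matrix.mul_trace_le_trace_of_posSemidef_sub_smul {ρ σ : Matrix d d ℂ} {c : ℂ}
    (h : (σ - c • ρ).PosSemidef) : c * ρ.trace ≤ σ.trace := by
  simpa [trace_sub, trace_smul] using h.trace_nonneg

end

namespace Matrix

variable {d : Type*} [Fintype d] [DecidableEq d]

lemma trace_diagonal_mul_mul_diagonal_mul_conjTranspose (M : Matrix d d ℂ) (a b : d → ℂ) :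
    (diagonal a * M * diagonal b * Mᴴ).trace = ∑ i, ∑ j, a i * b j * normSq (M i j) := by
  simp only [trace, diag_apply, mul_apply, diagonal_apply, conjTranspose_apply, ite_mul,
    zero_mul, mul_ite, mul_zero, Finset.sum_ite_eq, Finset.sum_ite_eq', Finset.mem_univ, if_true]
  refine Finset.sum_congr rfl fun i _ => Finset.sum_congr rfl fun j _ => ?_
  rw [← Complex.mul_conj, Complex.star_def]
  ring

lemma trace_mul_diagonal_mul_conjTranspose_mul (U V : Matrix d d ℂ) (a b : d → ℂ) :
    (U * diagonal a * Uᴴ * (V * diagonal b * Vᴴ)).trace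
      = ∑ i, ∑ j, a i * b j * normSq ((Uᴴ * V) i j) := by
  rw [← trace_diagonal_mul_mul_diagonal_mul_conjTranspose, conjTranspose_mul,
    conjTranspose_conjTranspose]
  simp only [Matrix.mul_assoc]
  rw [trace_mul_comm U]
  simp only [Matrix.mul_assoc]

lemma star_dotProduct_diagonal_mulVec (μ : d → ℝ) (g : d → ℂ) :
    star g ⬝ᵥ diagonal (fun j => (μ j : ℂ)) *ᵥ g = ((∑ j, μ j * normSq (g j) : ℝ) : ℂ) := by
  push_cast
  refine Finset.sum_congr rfl fun j _ => ?_
  rw [mulVec_diagonal, Pi.star_apply, Complex.star_def, ← Complex.mul_conj]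
  ring

lemma sum_normSq_apply_eq_one {M : Matrix d d ℂ} (hM : M * Mᴴ = 1) (i : d) :
    ∑ j, normSq (M i j) = 1 := by
  have := congrFun (congrFun hM i) i
  simp only [mul_apply, conjTranspose_apply, one_apply_eq, Complex.star_def,
    Complex.mul_conj] at this
  exact_mod_cast this

namespace PosSemidef

variable {μ p : d → ℝ} {c : ℝ} {M : Matrix d d ℂ}

lemma mul_sum_mul_normSq_mulVec_le
    (hD : (diagonal (fun j => (μ j : ℂ)) -
      (c : ℂ) • (Mᴴ * diagonal (fun i => (p i : ℂ)) * M)).PosSemidef)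
    (g : d → ℂ) : c * ∑ i, p i * normSq ((M *ᵥ g) i) ≤ ∑ j, μ j * normSq (g j) := by
  have h := hD.dotProduct_mulVec_nonneg g
  rw [sub_mulVec, dotProduct_sub, smul_mulVec, dotProduct_smul, ← mulVec_mulVec,
    ← mulVec_mulVec, dotProduct_mulVec (star g) Mᴴ, ← star_mulVec, star_dotProduct_diagonal_mulVec,
    star_dotProduct_diagonal_mulVec, smul_eq_mul, ← Complex.ofReal_mul, ← Complex.ofReal_sub] at h
  exact sub_nonneg.mp (Complex.zero_le_real.mp h)

lemma apply_eq_zero_of_diagonal_sub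
    (hD : (diagonal (fun j => (μ j : ℂ)) -
      (c : ℂ) • (Mᴴ * diagonal (fun i => (p i : ℂ)) * M)).PosSemidef)
    (hp : 0 ≤ p) (hc : 0 < c) {i j : d} (hpi : p i ≠ 0) (hμj : μ j = 0) : M i j = 0 := by
  have h := hD.mul_sum_mul_normSq_mulVec_le (Pi.single j 1)
  simp only [mulVec_single_one, col_apply, Pi.single_apply, apply_ite normSq, map_one, map_zero,
    mul_ite, mul_one, mul_zero, Finset.sum_ite_eq', Finset.mem_univ, if_true, hμj] at h
  have hterm : ∀ l ∈ Finset.univ, 0 ≤ p l * normSq (M l j) :=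
    fun l _ => mul_nonneg (hp l) (Complex.normSq_nonneg _)
  have hsum : ∑ l, p l * normSq (M l j) = 0 :=
    le_antisymm (nonpos_of_mul_nonpos_right h hc) (Finset.sum_nonneg hterm)
  have := (Finset.sum_eq_zero_iff_of_nonneg hterm).mp hsum i (Finset.mem_univ i)
  simpa [hpi] using this

/-- Tested on `g j = conj (M i j) / μ j`, the vector for which `(M *ᵥ g) i` is the quantity
`∑ j, |M i j|² / μ j` itself. -/
lemma mul_mul_sq_sum_normSq_div_le
    (hD : (diagonal (fun j => (μ j : ℂ)) -
      (c : ℂ) • (Mᴴ * diagonal (fun i => (p i : ℂ)) * M)).PosSemidef)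
    (hp : 0 ≤ p) (hc : 0 ≤ c) (i : d) :
    c * p i * (∑ j, normSq (M i j) / μ j) ^ 2 ≤ ∑ j, normSq (M i j) / μ j := by
  set g : d → ℂ := fun j => star (M i j) / μ j
  have hMg : (M *ᵥ g) i = ((∑ j, normSq (M i j) / μ j : ℝ) : ℂ) := by
    push_cast
    refine Finset.sum_congr rfl fun j _ => ?_
    rw [← mul_div_assoc, Complex.star_def, Complex.mul_conj]
  have hg : ∑ j, μ j * normSq (g j) = ∑ j, normSq (M i j) / μ j := by
    refine Finset.sum_congr rfl fun j _ => ?_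
    rcases eq_or_ne (μ j) 0 with hμj | hμj
    · simp [hμj]
    · rw [Complex.normSq_div, Complex.star_def, Complex.normSq_conj, Complex.normSq_ofReal]
      field_simp
  calc c * p i * (∑ j, normSq (M i j) / μ j) ^ 2 = c * (p i * normSq ((M *ᵥ g) i)) := by
        rw [hMg, Complex.normSq_ofReal]; ring
    _ ≤ c * ∑ l, p l * normSq ((M *ᵥ g) l) :=
        mul_le_mul_of_nonneg_left (Finset.single_le_sum
          (fun l _ => mul_nonneg (hp l) (Complex.normSq_nonneg _)) (Finset.mem_univ i)) hc
    _ ≤ ∑ j, normSq (M i j) / μ j := hg ▸ hD.mul_sum_mul_normSq_mulVec_le g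

lemma log_mul_le_sum_normSq_mul_log
    (hD : (diagonal (fun j => (μ j : ℂ)) -
      (c : ℂ) • (Mᴴ * diagonal (fun i => (p i : ℂ)) * M)).PosSemidef)
    (hM : M * Mᴴ = 1) (hp : 0 ≤ p) (hμ : 0 ≤ μ) (hc : 0 < c) {i : d} (hpi : 0 < p i) :
    Real.log (c * p i) ≤ ∑ j, normSq (M i j) * Real.log (μ j) := by
  have hsupp : ∀ j, μ j = 0 → normSq (M i j) = 0 := fun j hμj => by
    rw [hD.apply_eq_zero_of_diagonal_sub hp hc hpi.ne' hμj, map_zero]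
  have hq := Real.sum_div_pos_of_sum_eq_one (fun j => Complex.normSq_nonneg (M i j)) hμ hsupp
    (sum_normSq_apply_eq_one hM i)
  refine Real.log_le_sum_mul_log (fun j => Complex.normSq_nonneg _) hμ hsupp
    (sum_normSq_apply_eq_one hM i) (mul_pos hc hpi) ?_
  have := hD.mul_mul_sq_sum_normSq_div_le hp hc.le i
  nlinarith

end PosSemidef

end Matrix

namespace Matrix.IsHermitian

variable {d : Type*} [Fintype d] [DecidableEq d] {A B : Matrix d d ℂ}

lemma eq_eigenvectorUnitary_mul_diagonal_mul_star (hA : A.IsHermitian) :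
    A = (hA.eigenvectorUnitary : Matrix d d ℂ) * diagonal (fun i => (hA.eigenvalues i : ℂ)) *
      star (hA.eigenvectorUnitary : Matrix d d ℂ) :=
  hA.spectral_theorem

/-- The entry `(i, j)` is the inner product of the `i`-th eigenvector of `A` with the `j`-th
eigenvector of `B`. -/
def eigenOverlap (hA : A.IsHermitian) (hB : B.IsHermitian) : Matrix d d ℂ :=
  star (hA.eigenvectorUnitary : Matrix d d ℂ) * hB.eigenvectorUnitary

lemma eigenOverlap_mul_conjTranspose (hA : A.IsHermitian) (hB : B.IsHermitian) :
    hA.eigenOverlap hB * (hA.eigenOverlap hB)ᴴ = 1 := by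
  rw [eigenOverlap, ← star_eq_conjTranspose, star_mul, star_star, Matrix.mul_assoc,
    ← Matrix.mul_assoc _ (star _), Unitary.mul_star_self_of_mem (Subtype.prop _), Matrix.one_mul,
    Unitary.star_mul_self_of_mem (Subtype.prop _)]

lemma star_eigenvectorUnitary_mul_mul_self (hB : B.IsHermitian) :
    star (hB.eigenvectorUnitary : Matrix d d ℂ) * B * hB.eigenvectorUnitary
      = diagonal (fun j => (hB.eigenvalues j : ℂ)) := by
  simpa [Function.comp_def] using hB.conjStarAlgAut_star_eigenvectorUnitary

lemma conjTranspose_eigenOverlap_mul_diagonal_mul (hA : A.IsHermitian) (hB : B.IsHermitian) :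
    (hA.eigenOverlap hB)ᴴ * diagonal (fun i => (hA.eigenvalues i : ℂ)) * hA.eigenOverlap hB
      = star (hB.eigenvectorUnitary : Matrix d d ℂ) * A * hB.eigenvectorUnitary := by
  conv_rhs => rw [hA.eq_eigenvectorUnitary_mul_diagonal_mul_star]
  simp only [eigenOverlap, ← star_eq_conjTranspose, star_mul, star_star, Matrix.mul_assoc]

lemma posSemidef_diagonal_sub_smul_conj_eigenOverlap (hA : A.IsHermitian) (hB : B.IsHermitian)
    {c : ℝ} (h : (B - (c : ℂ) • A).PosSemidef) :
    (diagonal (fun j => (hB.eigenvalues j : ℂ)) - (c : ℂ) •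
      ((hA.eigenOverlap hB)ᴴ * diagonal (fun i => (hA.eigenvalues i : ℂ)) *
        hA.eigenOverlap hB)).PosSemidef := by
  have := h.conjTranspose_mul_mul_same (hB.eigenvectorUnitary : Matrix d d ℂ)
  rwa [Matrix.mul_sub, Matrix.sub_mul, Matrix.mul_smul, Matrix.smul_mul, ← star_eq_conjTranspose,
    hB.star_eigenvectorUnitary_mul_mul_self, ← hA.conjTranspose_eigenOverlap_mul_diagonal_mul hB]
    at this

lemma eigenOverlap_self (hA : A.IsHermitian) : hA.eigenOverlap hA = 1 :=
  Unitary.star_mul_self_of_mem (Subtype.prop _)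

lemma trace_mul_matLog (hA : A.IsHermitian) (hB : B.IsHermitian) :
    (A * matLog B).trace = ((∑ i, ∑ j, hA.eigenvalues i * Real.log (hB.eigenvalues j) *
      normSq (hA.eigenOverlap hB i j) : ℝ) : ℂ) := by
  rw [matLog, dif_pos hB]
  conv_lhs => rw [hA.eq_eigenvectorUnitary_mul_diagonal_mul_star]
  simp only [star_eq_conjTranspose, trace_mul_diagonal_mul_conjTranspose_mul]
  push_cast
  rfl

end Matrix.IsHermitian

section

variable {d : Type*} [Fintype d] [DecidableEq d] {ρ σ : Matrix d d ℂ}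

lemma relEnt_eq_sum_mul_sub (hρ : ρ.IsHermitian) (hσ : σ.IsHermitian) :
    relEnt ρ σ = ∑ i, hρ.eigenvalues i * (Real.log (hρ.eigenvalues i) -
      ∑ j, normSq (hρ.eigenOverlap hσ i j) * Real.log (hσ.eigenvalues j)) := by
  rw [relEnt, Matrix.mul_sub, trace_sub, hρ.trace_mul_matLog hρ, hρ.trace_mul_matLog hσ,
    ← Complex.ofReal_sub, Complex.ofReal_re, hρ.eigenOverlap_self, ← Finset.sum_sub_distrib]
  refine Finset.sum_congr rfl fun i _ => ?_
  simp only [one_apply, apply_ite normSq, map_one, map_zero, mul_ite, mul_one, mul_zero,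
    Finset.sum_ite_eq, Finset.mem_univ, if_true, mul_sub, Finset.mul_sum]
  congr 1
  exact Finset.sum_congr rfl fun j _ => by ring

lemma relEnt_le_neg_log_of_posSemidef_sub_smul {c : ℝ} (hρ : ρ.PosSemidef)
    (hρ1 : ρ.trace = 1) (hσ : σ.PosSemidef) (hc : 0 < c) (h : (σ - (c : ℂ) • ρ).PosSemidef) :
    relEnt ρ σ ≤ -Real.log c := by
  rw [relEnt_eq_sum_mul_sub hρ.1 hσ.1]
  set p := hρ.1.eigenvalues
  have hp : 0 ≤ p := hρ.eigenvalues_nonneg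
  have hD := hρ.1.posSemidef_diagonal_sub_smul_conj_eigenOverlap hσ.1 h
  have hsum : ∑ i, p i = 1 := by
    simpa [hρ1] using congrArg Complex.re hρ.1.trace_eq_sum_eigenvalues.symm
  calc _ ≤ ∑ i, p i * -Real.log c := Finset.sum_le_sum fun i _ => ?_
    _ = -Real.log c := by rw [← Finset.sum_mul, hsum, one_mul]
  rcases (hp i).eq_or_lt' with hpi | hpi
  · simp [hpi]
  · have := hD.log_mul_le_sum_normSq_mul_log (hρ.1.eigenOverlap_mul_conjTranspose hσ.1) hp
      hσ.eigenvalues_nonneg hc hpi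
    rw [Real.log_mul hc.ne' hpi.ne'] at this
    exact mul_le_mul_of_nonneg_left (by linarith) (hp i)

end

/-- Strong substate property bounds relative entropy. -/
theorem strong_substate_bounds_relEnt {n : ℕ} (ρ σ : Matrix (Fin n) (Fin n) ℂ)
    (hρ : IsState ρ) (hσ : IsState σ) (k : ℝ)
    (h : (σ - (((2 : ℝ) ^ (-k) : ℝ) : ℂ) • ρ).PosSemidef) :
    SuppLE ρ σ ∧ relEnt ρ σ ≤ k := by
  obtain ⟨hρ, hρ1⟩ := hρ
  obtain ⟨hσ, hσ1⟩ := hσ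
  have hc : 0 < (2 : ℝ) ^ (-k) := by positivity
  refine ⟨suppLE_of_posSemidef_sub_smul hρ hc h, ?_⟩
  have hc1 : (2 : ℝ) ^ (-k) ≤ 1 := by
    have := Matrix.mul_trace_le_trace_of_posSemidef_sub_smul h
    rw [hρ1, hσ1, mul_one] at this
    exact_mod_cast this
  have hk : 0 ≤ k := by
    by_contra hk
    exact hc1.not_gt (Real.one_lt_rpow one_lt_two (by linarith))
  calc relEnt ρ σ ≤ -Real.log ((2 : ℝ) ^ (-k)) :=
        relEnt_le_neg_log_of_posSemidef_sub_smul hρ hρ1 hσ hc h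
    _ = k * Real.log 2 := by rw [Real.log_rpow two_pos]; ring
    _ ≤ k := mul_le_of_le_one_right hk (by linarith [Real.log_two_lt_d9])
end
end

section
/- Classical comparison of divergence and relative entropy: Let P and Q be probability distributions on Fin n with supp(P) ⊆ supp(Q). Then D(P‖Q) − 1 ≤ S(P‖Q) ≤ D(P‖Q) · (n − 1). -/
open Matrix BigOperators
open scoped ComplexOrder

noncomputable section

/-! The lower bound is data processing: a test `f` coarse-grains `P` and `Q` into the two-point
distributions `(p, 1 - p)` and `(q, 1 - q)`, `p = ∑ f P`, `q = ∑ f Q`, so by the log-sum inequality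
`p log (p / q) + (1 - p) log ((1 - p) / (1 - q)) ≤ S(P‖Q)`, and the second term is at least
`-negMulLog (1 - p) ≥ -log 2`, i.e. one bit.

For the upper bound, each summand `P i log (P i / Q i)` is the value of the indicator test of `i`,
hence at most `D(P‖Q)`, while `∑ P = ∑ Q` forces some `P i ≤ Q i`, whose summand is `≤ 0`. -/

open Real Finset

section LogSum

variable {ι : Type*}

/-- The log-sum inequality. -/
theorem sum_mul_log_sum_div_le_sum_mul_log_div (s : Finset ι) {a b : ι → ℝ}
    (ha : ∀ i ∈ s, 0 ≤ a i) (hb : ∀ i ∈ s, 0 ≤ b i) (hab : ∀ i ∈ s, b i = 0 → a i = 0) :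
    (∑ i ∈ s, a i) * log ((∑ i ∈ s, a i) / ∑ i ∈ s, b i) ≤ ∑ i ∈ s, a i * log (a i / b i) := by
  rcases (sum_nonneg hb).eq_or_lt with hB | hB
  · have ha0 : ∀ i ∈ s, a i = 0 := fun i hi =>
      hab i hi ((sum_eq_zero_iff_of_nonneg hb).1 hB.symm i hi)
    rw [sum_eq_zero ha0, zero_mul]
    exact (sum_eq_zero fun i hi => by simp [ha0 i hi]).ge
  set A := ∑ i ∈ s, a i
  set B := ∑ i ∈ s, b i
  have hba : ∀ i ∈ s, b i / B * (a i / b i) = a i / B := fun i hi => by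
    rcases eq_or_ne (b i) 0 with h | h
    · simp [h, hab i hi h]
    · field_simp
  have hJensen := convexOn_mul_log.map_sum_le (t := s) (w := fun i => b i / B)
    (p := fun i => a i / b i) (fun i hi => div_nonneg (hb i hi) hB.le)
    (by rw [← sum_div, div_self hB.ne'])
    (fun i hi => Set.mem_Ici.2 (div_nonneg (ha i hi) (hb i hi)))
  have hmean : ∑ i ∈ s, b i / B * (a i / b i) = A / B := by rw [sum_congr rfl hba, ← sum_div]
  have hvalue : ∑ i ∈ s, b i / B * (a i / b i * log (a i / b i)) =
      (∑ i ∈ s, a i * log (a i / b i)) / B := by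
    rw [sum_div]
    exact sum_congr rfl fun i hi => by rw [← mul_assoc, hba i hi, div_mul_eq_mul_div]
  simp only [smul_eq_mul] at hJensen
  rw [hmean, hvalue] at hJensen
  calc A * log (A / B) = B * (A / B * log (A / B)) := by field_simp
    _ ≤ B * ((∑ i ∈ s, a i * log (a i / b i)) / B) := by gcongr
    _ = ∑ i ∈ s, a i * log (a i / b i) := by field_simp

theorem sum_mul_log_sum_div_le_sum_mul_mul_log_div (s : Finset ι) {w P Q : ι → ℝ}
    (hw : ∀ i ∈ s, 0 ≤ w i) (hP : ∀ i ∈ s, 0 ≤ P i) (hQ : ∀ i ∈ s, 0 ≤ Q i)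
    (hPQ : ∀ i ∈ s, Q i = 0 → P i = 0) :
    (∑ i ∈ s, w i * P i) * log ((∑ i ∈ s, w i * P i) / ∑ i ∈ s, w i * Q i) ≤
      ∑ i ∈ s, w i * (P i * log (P i / Q i)) := by
  refine (sum_mul_log_sum_div_le_sum_mul_log_div s (fun i hi => mul_nonneg (hw i hi) (hP i hi))
    (fun i hi => mul_nonneg (hw i hi) (hQ i hi)) fun i hi h => ?_).trans_eq
    (sum_congr rfl fun i _ => ?_)
  · rcases mul_eq_zero.1 h with h | h
    · simp [h]
    · simp [hPQ i hi h]
  · rcases eq_or_ne (w i) 0 with h | h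
    · simp [h]
    · rw [mul_div_mul_left _ _ h, mul_assoc]

end LogSum

section TwoPointTest

variable {ι : Type*} [Fintype ι] {f P Q : ι → ℝ}

theorem mul_log_add_mul_log_le_sum_mul_log (hf : ∀ i, 0 ≤ f i ∧ f i ≤ 1)
    (hP0 : ∀ i, 0 ≤ P i) (hP1 : ∑ i, P i = 1) (hQ0 : ∀ i, 0 ≤ Q i) (hQ1 : ∑ i, Q i = 1)
    (hPQ : ∀ i, Q i = 0 → P i = 0) :
    (∑ i, f i * P i) * log ((∑ i, f i * P i) / ∑ i, f i * Q i) +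
      (1 - ∑ i, f i * P i) * log ((1 - ∑ i, f i * P i) / (1 - ∑ i, f i * Q i)) ≤
      ∑ i, P i * log (P i / Q i) := by
  have hcompl : ∀ R : ι → ℝ, ∑ i, R i = 1 → ∑ i, (1 - f i) * R i = 1 - ∑ i, f i * R i :=
    fun R hR => by simp only [sub_mul, one_mul, sum_sub_distrib, hR]
  have htest := sum_mul_log_sum_div_le_sum_mul_mul_log_div univ (fun i _ => (hf i).1)
    (fun i _ => hP0 i) (fun i _ => hQ0 i) fun i _ => hPQ i
  have hcotest := sum_mul_log_sum_div_le_sum_mul_mul_log_div univ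
    (fun i _ => sub_nonneg.2 (hf i).2) (fun i _ => hP0 i) (fun i _ => hQ0 i) fun i _ => hPQ i
  rw [hcompl P hP1, hcompl Q hQ1] at hcotest
  calc _ ≤ ∑ i, f i * (P i * log (P i / Q i)) + ∑ i, (1 - f i) * (P i * log (P i / Q i)) :=
        add_le_add htest hcotest
    _ = ∑ i, P i * log (P i / Q i) := by rw [← sum_add_distrib]; simp only [← add_mul]; simp

theorem neg_mul_log_div_le_log_two {t s : ℝ} (ht0 : 0 ≤ t) (ht1 : t ≤ 1) (hs0 : 0 ≤ s)
    (hs1 : s ≤ 1) : -(t * log (t / s)) ≤ log 2 := by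
  have hlog : t * log t ≤ t * log (t / s) := by
    rcases ht0.eq_or_lt with rfl | ht
    · simp
    rcases hs0.eq_or_lt with rfl | hs
    · simpa using mul_nonpos_of_nonneg_of_nonpos ht0 (log_nonpos ht0 ht1)
    rw [log_div ht.ne' hs.ne']
    nlinarith [log_nonpos hs0 hs1]
  have hbin : negMulLog t ≤ log 2 := by
    have := negMulLog_nonneg (sub_nonneg.2 ht1) (sub_le_self 1 ht0)
    linarith [binEntropy_le_log_two (p := t), binEntropy_eq_negMulLog_add_negMulLog_one_sub t]
  rw [negMulLog] at hbin
  linarith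

theorem sum_mul_le_one (hf : ∀ i, 0 ≤ f i ∧ f i ≤ 1) (hP0 : ∀ i, 0 ≤ P i)
    (hP1 : ∑ i, P i = 1) : ∑ i, f i * P i ≤ 1 :=
  hP1 ▸ sum_le_sum fun i _ => mul_le_of_le_one_left (hP0 i) (hf i).2

theorem mul_log_div_le_sum_mul_log_add_log_two (hf : ∀ i, 0 ≤ f i ∧ f i ≤ 1)
    (hP0 : ∀ i, 0 ≤ P i) (hP1 : ∑ i, P i = 1) (hQ0 : ∀ i, 0 ≤ Q i) (hQ1 : ∑ i, Q i = 1)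
    (hPQ : ∀ i, Q i = 0 → P i = 0) :
    (∑ i, f i * P i) * log ((∑ i, f i * P i) / ∑ i, f i * Q i) ≤
      ∑ i, P i * log (P i / Q i) + log 2 := by
  have hbit := neg_mul_log_div_le_log_two (sub_nonneg.2 (sum_mul_le_one hf hP0 hP1))
    (sub_le_self 1 (sum_nonneg fun i _ => mul_nonneg (hf i).1 (hP0 i)))
    (sub_nonneg.2 (sum_mul_le_one hf hQ0 hQ1))
    (sub_le_self 1 (sum_nonneg fun i _ => mul_nonneg (hf i).1 (hQ0 i)))
  linarith [mul_log_add_mul_log_le_sum_mul_log hf hP0 hP1 hQ0 hQ1 hPQ]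

end TwoPointTest

theorem sum_le_card_sub_one_mul {ι : Type*} [Fintype ι] {g : ι → ℝ} {M : ℝ} (hg : ∀ i, g i ≤ M)
    (i₀ : ι) (hi₀ : g i₀ ≤ 0) : ∑ i, g i ≤ ((Fintype.card ι : ℝ) - 1) * M := by
  classical
  have hrest := sum_le_sum (s := univ.erase i₀) fun i _ => hg i
  rw [sum_const, card_erase_of_mem (mem_univ i₀), card_univ, nsmul_eq_mul,
    Nat.cast_sub (Fintype.card_pos_iff.2 ⟨i₀⟩), Nat.cast_one] at hrest
  rw [← add_sum_erase univ g (mem_univ i₀)]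
  linarith

theorem mul_logb_div_nonpos {p q : ℝ} (hp : 0 ≤ p) (hq : 0 ≤ q) (hpq : p ≤ q) :
    p * logb 2 (p / q) ≤ 0 :=
  mul_nonpos_of_nonneg_of_nonpos hp (logb_nonpos one_lt_two (div_nonneg hp hq)
    (div_le_one_of_le₀ hpq hq))

section ObservationalDivergence

variable {n : ℕ} {P Q : Fin n → ℝ}

def cObsValues (P Q : Fin n → ℝ) : Set ℝ :=
  {x : ℝ | ∃ f : Fin n → ℝ, (∀ i, 0 ≤ f i ∧ f i ≤ 1) ∧
    (∑ i, f i * Q i) ≠ 0 ∧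
    x = (∑ i, f i * P i) * Real.logb 2 ((∑ i, f i * P i) / (∑ i, f i * Q i))}

theorem cObsDiv_eq_sSup_cObsValues : cObsDiv P Q = sSup (cObsValues P Q) := rfl

theorem cRelEnt_eq_sum_mul_log_div_log_two :
    cRelEnt P Q = (∑ i, P i * log (P i / Q i)) / log 2 := by
  simp only [cRelEnt, logb, sum_div, mul_div_assoc]

theorem zero_mem_cObsValues (hP : ∑ i, P i = 1) (hQ : ∑ i, Q i = 1) : 0 ∈ cObsValues P Q :=
  ⟨1, fun _ => ⟨zero_le_one, le_rfl⟩, by simp [hQ], by simp [hP, hQ]⟩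

theorem mul_logb_div_mem_cObsValues {i : Fin n} (hQi : Q i ≠ 0) :
    P i * logb 2 (P i / Q i) ∈ cObsValues P Q :=
  ⟨Pi.single i 1, fun j => by by_cases h : j = i <;> simp [h], by simpa [Pi.single_apply] using hQi,
    by simp [Pi.single_apply]⟩

theorem le_cRelEnt_add_one_of_mem_cObsValues (hP : IsProbDist P) (hQ : IsProbDist Q)
    (hPQ : ∀ i, Q i = 0 → P i = 0) {x : ℝ} (hx : x ∈ cObsValues P Q) :
    x ≤ cRelEnt P Q + 1 := by
  obtain ⟨f, hf, -, rfl⟩ := hx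
  have hlog2 : 0 < log 2 := log_pos one_lt_two
  rw [cRelEnt_eq_sum_mul_log_div_log_two, logb, ← mul_div_assoc, ← div_self hlog2.ne',
    ← add_div, div_le_div_iff_of_pos_right hlog2]
  exact mul_log_div_le_sum_mul_log_add_log_two hf hP.1 hP.2 hQ.1 hQ.2 hPQ

theorem cObsDiv_le_cRelEnt_add_one (hP : IsProbDist P) (hQ : IsProbDist Q)
    (hPQ : ∀ i, Q i = 0 → P i = 0) : cObsDiv P Q ≤ cRelEnt P Q + 1 :=
  csSup_le ⟨0, zero_mem_cObsValues hP.2 hQ.2⟩ fun _ =>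
    le_cRelEnt_add_one_of_mem_cObsValues hP hQ hPQ

theorem mul_logb_div_le_cObsDiv (hP : IsProbDist P) (hQ : IsProbDist Q)
    (hPQ : ∀ i, Q i = 0 → P i = 0) (i : Fin n) : P i * logb 2 (P i / Q i) ≤ cObsDiv P Q := by
  have hbdd : BddAbove (cObsValues P Q) :=
    ⟨_, fun _ => le_cRelEnt_add_one_of_mem_cObsValues hP hQ hPQ⟩
  rw [cObsDiv_eq_sSup_cObsValues]
  by_cases hQi : Q i = 0
  · simpa [hQi] using le_csSup hbdd (zero_mem_cObsValues hP.2 hQ.2)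
  · exact le_csSup hbdd (mul_logb_div_mem_cObsValues hQi)

end ObservationalDivergence

/-- Classical comparison of divergence and relative entropy. -/
theorem classical_div_vs_relEnt {n : ℕ} (P Q : Fin n → ℝ)
    (hP : IsProbDist P) (hQ : IsProbDist Q)
    (hsupp : ∀ i, Q i = 0 → P i = 0) :
    cObsDiv P Q - 1 ≤ cRelEnt P Q ∧ cRelEnt P Q ≤ cObsDiv P Q * ((n : ℝ) - 1) := by
  refine ⟨sub_le_iff_le_add.2 (cObsDiv_le_cRelEnt_add_one hP hQ hsupp), ?_⟩
  obtain ⟨i₀, -, hi₀⟩ := exists_le_of_sum_le (nonempty_of_sum_ne_zero (hP.2 ▸ one_ne_zero))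
    (hP.2.trans hQ.2.symm).le
  have hsum := sum_le_card_sub_one_mul (mul_logb_div_le_cObsDiv hP hQ hsupp) i₀
    (mul_logb_div_nonpos (hP.1 i₀) (hQ.1 i₀) hi₀)
  rwa [Fintype.card_fin, mul_comm] at hsum
end
end

section
/- A two-outcome measurement nearly preserving relative entropy: Let ρ and σ be quantum states on ℂ^n with supp(ρ) ⊆ supp(σ). Then there exists a POVM element F on ℂ^n such that, setting p := Tr(Fρ) and q := Tr(Fσ) and letting S₂ := p·logb 2 (p/q) + (1−p)·logb 2 ((1−p)/(1−q)) (terms with zero first factor contribute 0), one has S(ρ‖σ) ≥ S₂ and S₂ ≥ (S(ρ‖σ) − logb 2 n)/(n − 1) − 1. -/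
open Matrix BigOperators
open scoped ComplexOrder

noncomputable section

open Real

/-!
Let `σ = ∑ⱼ Qⱼ |wⱼ⟩⟨wⱼ|` and let `Pⱼ = ⟨wⱼ|ρ|wⱼ⟩` be the outcome distribution of measuring `ρ` in
the eigenbasis of `σ`. The diagonal of `ρ` in any basis is majorized by its spectrum, so
`D(P‖Q) ≤ S(ρ‖σ) ≤ -∑ⱼ Pⱼ log Qⱼ` (natural logarithms). The POVM element is
`F = log 2 · |wᵢ⟩⟨wᵢ|`, with outcome probabilities `(log 2 · Pᵢ, log 2 · Qᵢ)`: by joint convexity the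
factor `log 2` shrinks the binary divergence enough to pay for the change to base 2, and coarse
graining bounds it by `D(P‖Q)`. Taking `i` to maximise `-Pᵢ log Qᵢ` gives the lower bound: some `j`
has `Qⱼ ≥ 1/n`, so its term is at most `log n`, and the binary divergence dominates
`-p log q - log 2`.
-/

def binKL (p q : ℝ) : ℝ := p * log (p / q) + (1 - p) * log ((1 - p) / (1 - q))

theorem binKL_div_log_two (p q : ℝ) :
    binKL p q / log 2 = p * logb 2 (p / q) + (1 - p) * logb 2 ((1 - p) / (1 - q)) := by
  simp only [binKL, logb]
  ring

theorem mul_log_div_eq_of_imp {a b : ℝ} (h : b = 0 → a = 0) :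
    a * log (a / b) = a * log a - a * log b := by
  rcases eq_or_ne a 0 with rfl | ha
  · simp
  · rw [log_div ha (mt h ha), mul_sub]

theorem mul_log_sub_mul_log_le_mul_log_div {a : ℝ} (b : ℝ) (ha₀ : 0 ≤ a) (ha₁ : a ≤ 1) :
    a * log a - a * log b ≤ a * log (a / b) := by
  rcases eq_or_ne b 0 with rfl | hb
  · simpa using mul_log_nonpos ha₀ ha₁
  · rw [mul_log_div_eq_of_imp fun h => absurd h hb]

theorem mul_log_sum_div_sum_le {ι : Type*} (s : Finset ι) {P Q : ι → ℝ}
    (hP : ∀ i ∈ s, 0 ≤ P i) (hQ : ∀ i ∈ s, 0 ≤ Q i) (hPQ : ∀ i ∈ s, Q i = 0 → P i = 0) :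
    (∑ i ∈ s, P i) * log ((∑ i ∈ s, P i) / ∑ i ∈ s, Q i) ≤ ∑ i ∈ s, P i * log (P i / Q i) := by
  have hcancel : ∀ i ∈ s, Q i * (P i / Q i) = P i := fun i hi =>
    mul_div_cancel_of_imp' (hPQ i hi)
  rcases (Finset.sum_nonneg hQ).eq_or_lt with hzero | hpos
  · have hQ0 : ∀ i ∈ s, Q i = 0 := (Finset.sum_eq_zero_iff_of_nonneg hQ).1 hzero.symm
    rw [← hzero, div_zero, log_zero, mul_zero]
    exact Finset.sum_nonneg fun i hi => by simp [hPQ i hi (hQ0 i hi)]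
  · set SQ := ∑ i ∈ s, Q i
    have jensen := convexOn_mul_log.map_sum_le (t := s) (w := fun i => Q i / SQ)
      (p := fun i => P i / Q i) (fun i hi => div_nonneg (hQ i hi) hpos.le)
      (by rw [← Finset.sum_div, div_self hpos.ne'])
      (fun i hi => Set.mem_Ici.2 (div_nonneg (hP i hi) (hQ i hi)))
    have hmean : ∑ i ∈ s, Q i / SQ * (P i / Q i) = (∑ i ∈ s, P i) / SQ := by
      rw [Finset.sum_div]
      exact Finset.sum_congr rfl fun i hi => by rw [div_mul_eq_mul_div, hcancel i hi]
    simp only [smul_eq_mul, hmean] at jensen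
    have hsum : ∑ i ∈ s, Q i / SQ * (P i / Q i * log (P i / Q i))
        = (∑ i ∈ s, P i * log (P i / Q i)) / SQ := by
      rw [Finset.sum_div]
      exact Finset.sum_congr rfl fun i hi => by
        rw [← mul_assoc, div_mul_eq_mul_div, hcancel i hi, div_mul_eq_mul_div]
    rw [hsum, div_mul_eq_mul_div, div_le_div_iff_of_pos_right hpos] at jensen
    exact jensen

theorem mul_log_add_div_add_le {a b c d : ℝ} (ha : 0 ≤ a) (hb : 0 ≤ b) (hc : 0 ≤ c) (hd : 0 ≤ d)
    (hab : b = 0 → a = 0) (hcd : d = 0 → c = 0) :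
    (a + c) * log ((a + c) / (b + d)) ≤ a * log (a / b) + c * log (c / d) := by
  simpa [Fin.sum_univ_two] using mul_log_sum_div_sum_le Finset.univ (P := ![a, c]) (Q := ![b, d])
    (by simp [Fin.forall_fin_two, ha, hc]) (by simp [Fin.forall_fin_two, hb, hd])
    (by simpa [Fin.forall_fin_two] using ⟨hab, hcd⟩)

/-- Joint convexity of `binKL` along the segment from `(0, 0)`, where it vanishes. -/
theorem binKL_mul_le {p q t : ℝ} (hp : p ≤ 1) (hq : q ≤ 1) (hpq : q = 1 → p = 1)
    (ht₀ : 0 ≤ t) (ht₁ : t ≤ 1) : binKL (t * p) (t * q) ≤ t * binKL p q := by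
  rcases ht₀.eq_or_lt with rfl | ht
  · simp [binKL]
  have hfirst : t * p * log (t * p / (t * q)) = t * (p * log (p / q)) := by
    rw [mul_div_mul_left _ _ ht.ne']; ring
  have hsecond := mul_log_add_div_add_le (a := t * (1 - p)) (b := t * (1 - q)) (c := 1 - t)
    (d := 1 - t) (by nlinarith) (by nlinarith) (by linarith) (by linarith)
    (fun h => by simp [hpq (by nlinarith [(mul_eq_zero.1 h).resolve_left ht.ne'])]) id
  have hzero : (1 - t) * log ((1 - t) / (1 - t)) = 0 := by
    rcases eq_or_ne (1 - t) 0 with h | h <;> simp [h]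
  rw [mul_div_mul_left _ _ ht.ne', hzero, add_zero,
    show t * (1 - p) + (1 - t) = 1 - t * p by ring,
    show t * (1 - q) + (1 - t) = 1 - t * q by ring] at hsecond
  unfold binKL
  nlinarith

theorem neg_mul_log_sub_log_two_le_binKL {p q : ℝ} (hp₀ : 0 ≤ p) (hp₁ : p ≤ 1)
    (hq₀ : 0 ≤ q) (hq₁ : q ≤ 1) : -(p * log q) - log 2 ≤ binKL p q := by
  have hfirst := mul_log_sub_mul_log_le_mul_log_div q hp₀ hp₁
  have hsecond := mul_log_sub_mul_log_le_mul_log_div (1 - q) (sub_nonneg.2 hp₁) (by linarith)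
  have hcross : (1 - p) * log (1 - q) ≤ 0 :=
    mul_nonpos_of_nonneg_of_nonpos (by linarith) (log_nonpos (by linarith) (by linarith))
  have hentropy := binEntropy_le_log_two (p := p)
  rw [binEntropy, log_inv, log_inv] at hentropy
  unfold binKL
  linarith

theorem log_le_logb_two {x : ℝ} (hx : 1 ≤ x) : log x ≤ logb 2 x := by
  rw [logb, le_div_iff₀ (log_pos one_lt_two)]
  nlinarith [log_nonneg hx, log_two_lt_d9]

section ProbDist

variable {n : ℕ} {P Q : Fin n → ℝ}

theorem binKL_le_sum_mul_log_div (hP : IsProbDist P)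
    (hQ : IsProbDist Q) (hPQ : ∀ j, Q j = 0 → P j = 0) (i : Fin n) :
    binKL (P i) (Q i) ≤ ∑ j, P j * log (P j / Q j) := by
  have hrest := mul_log_sum_div_sum_le (Finset.univ.erase i) (fun j _ => hP.1 j)
    (fun j _ => hQ.1 j) (fun j _ => hPQ j)
  rw [Finset.sum_erase_eq_sub (Finset.mem_univ i), Finset.sum_erase_eq_sub (Finset.mem_univ i),
    hP.2, hQ.2] at hrest
  rw [← Finset.add_sum_erase _ _ (Finset.mem_univ i)]
  unfold binKL
  linarith

theorem IsProbDist.eq_one_of_eq_one (hP : IsProbDist P)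
    (hQ : IsProbDist Q) (hPQ : ∀ j, Q j = 0 → P j = 0) {i : Fin n} (hi : Q i = 1) :
    P i = 1 := by
  have hQrest : ∑ j ∈ Finset.univ.erase i, Q j = 0 := by
    rw [Finset.sum_erase_eq_sub (Finset.mem_univ i), hQ.2, hi, sub_self]
  have hPrest : ∑ j ∈ Finset.univ.erase i, P j = 0 := Finset.sum_eq_zero fun j hj =>
    hPQ j ((Finset.sum_eq_zero_iff_of_nonneg fun j _ => hQ.1 j).1 hQrest j hj)
  rw [Finset.sum_erase_eq_sub (Finset.mem_univ i), hP.2] at hPrest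
  linarith

theorem IsProbDist.le_one (hP : IsProbDist P) (i : Fin n) : P i ≤ 1 :=
  hP.2 ▸ Finset.single_le_sum (fun j _ => hP.1 j) (Finset.mem_univ i)

theorem IsProbDist.neg_mul_log_nonneg (hP : IsProbDist P)
    (hQ : IsProbDist Q) (i : Fin n) : 0 ≤ -(P i * log (Q i)) :=
  neg_nonneg.2 (mul_nonpos_of_nonneg_of_nonpos (hP.1 i) (log_nonpos (hQ.1 i) (hQ.le_one i)))

theorem exists_sum_neg_mul_log_sub_log_div_le (hP : IsProbDist P)
    (hQ : IsProbDist Q) :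
    ∃ i, (∑ j, -(P j * log (Q j)) - log n) / (n - 1) ≤ -(P i * log (Q i)) := by
  have hne : (Finset.univ : Finset (Fin n)).Nonempty := by
    by_contra h
    simpa [Finset.not_nonempty_iff_eq_empty.1 h] using hQ.2
  obtain ⟨i, -, hi⟩ := Finset.exists_max_image _ (fun j => -(P j * log (Q j))) hne
  obtain ⟨k, -, hk⟩ := Finset.exists_max_image _ Q hne
  have hn : (1 : ℝ) ≤ n := by exact_mod_cast i.pos
  have hQk : 1 ≤ n * Q k := by
    simpa [hQ.2] using Finset.sum_le_card_nsmul Finset.univ Q (Q k) fun j _ => hk j (by simp)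
  have hQk₀ : 0 < Q k := pos_of_mul_pos_right (by linarith) (by linarith : (0 : ℝ) ≤ n)
  have hlog : -log (Q k) ≤ log n := by
    have := log_nonneg hQk
    rw [log_mul (by linarith) hQk₀.ne'] at this
    linarith
  have hterm : -(P k * log (Q k)) ≤ log n := by
    have := log_nonpos hQk₀.le (hQ.le_one k)
    nlinarith [hP.1 k, hP.le_one k]
  have hrest : ∑ j ∈ Finset.univ.erase k, -(P j * log (Q j)) ≤ (n - 1) * -(P i * log (Q i)) := by
    simpa [Finset.card_erase_of_mem, Nat.cast_sub i.pos] using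
      Finset.sum_le_card_nsmul (Finset.univ.erase k) _ _ fun j _ => hi j (by simp)
  refine ⟨i, div_le_of_le_mul₀ (by linarith) (hP.neg_mul_log_nonneg hQ i) ?_⟩
  rw [← Finset.add_sum_erase _ _ (Finset.mem_univ k)]
  linarith

theorem exists_binKL_mul_log_two_bounds (hP : IsProbDist P)
    (hQ : IsProbDist Q) (hPQ : ∀ j, Q j = 0 → P j = 0) {S : ℝ}
    (hlow : ∑ j, P j * log (P j / Q j) ≤ S) (hup : S ≤ ∑ j, -(P j * log (Q j))) :
    ∃ i, binKL (log 2 * P i) (log 2 * Q i) / log 2 ≤ S ∧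
      (S - logb 2 n) / (n - 1) - 1 ≤ binKL (log 2 * P i) (log 2 * Q i) / log 2 := by
  have ht₀ : 0 < log 2 := log_pos one_lt_two
  have ht₁ : log 2 < 1 := by linarith [log_two_lt_d9]
  obtain ⟨i, hi⟩ := exists_sum_neg_mul_log_sub_log_div_le hP hQ
  refine ⟨i, ?_, ?_⟩
  · rw [div_le_iff₀ ht₀, mul_comm S]
    calc binKL (log 2 * P i) (log 2 * Q i)
        ≤ log 2 * binKL (P i) (Q i) :=
          binKL_mul_le (hP.le_one i) (hQ.le_one i) (hP.eq_one_of_eq_one hQ hPQ) ht₀.le ht₁.le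
      _ ≤ log 2 * S := by gcongr; exact (binKL_le_sum_mul_log_div hP hQ hPQ i).trans hlow
  · have hn : (1 : ℝ) ≤ n := by exact_mod_cast i.pos
    have hscaled : log (log 2 * Q i) ≤ log (Q i) := by
      rcases (hQ.1 i).eq_or_lt with hzero | hpos
      · simp [← hzero]
      · exact log_le_log (by positivity) (by nlinarith)
    have hcross : -(P i * log (Q i)) - 1 ≤ binKL (log 2 * P i) (log 2 * Q i) / log 2 := by
      rw [le_div_iff₀ ht₀]
      have := neg_mul_log_sub_log_two_le_binKL (p := log 2 * P i) (q := log 2 * Q i)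
        (by nlinarith [hP.1 i]) (by nlinarith [hP.le_one i]) (by nlinarith [hQ.1 i])
        (by nlinarith [hQ.le_one i, hQ.1 i])
      nlinarith [mul_le_mul_of_nonneg_left hscaled (mul_nonneg ht₀.le (hP.1 i))]
    have hS : (S - logb 2 n) / (n - 1) ≤ (∑ j, -(P j * log (Q j)) - log n) / (n - 1) :=
      div_le_div_of_nonneg_right (by linarith [log_le_logb_two hn]) (by linarith)
    linarith

end ProbDist

section Matrix

variable {d : Type*} [Fintype d]

def basisProb (U A : Matrix d d ℂ) (j : d) : ℝ := ((star U * A * U) j j).re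

variable [DecidableEq d]

theorem sum_normSq_row_eq_one {W : Matrix d d ℂ} (hW : W ∈ unitaryGroup d ℂ) (j : d) :
    ∑ i, Complex.normSq (W j i) = 1 := by
  have h := congrFun (congrFun (mem_unitaryGroup_iff.1 hW) j) j
  simp only [mul_apply, star_apply, one_apply_eq, RCLike.star_def, Complex.mul_conj] at h
  exact_mod_cast h

theorem sum_normSq_col_eq_one {W : Matrix d d ℂ} (hW : W ∈ unitaryGroup d ℂ) (i : d) :
    ∑ j, Complex.normSq (W j i) = 1 := by
  simpa using sum_normSq_row_eq_one (Unitary.star_mem hW) i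

theorem re_mul_diagonal_mul_star_apply_self (W : Matrix d d ℂ) (x : d → ℝ) (j : d) :
    ((W * diagonal (fun i => (x i : ℂ)) * star W) j j).re = ∑ i, Complex.normSq (W j i) * x i := by
  simp only [mul_apply, diagonal_apply, mul_ite, mul_zero, Finset.sum_ite_eq', Finset.mem_univ,
    if_true, star_apply, RCLike.star_def, Complex.re_sum, Complex.mul_re, Complex.ofReal_re,
    Complex.ofReal_im, Complex.mul_im, Complex.conj_re, Complex.conj_im, Complex.normSq_apply]
  exact Finset.sum_congr rfl fun i _ => by ring

theorem re_trace_conj_diagonal_mul (U A : Matrix d d ℂ) (f : d → ℝ) :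
    (trace (U * diagonal (fun j => (f j : ℂ)) * star U * A)).re = ∑ j, f j * basisProb U A j := by
  rw [mul_assoc, trace_mul_comm, ← mul_assoc]
  simp [trace, mul_diagonal, basisProb, mul_comm]

theorem basisProb_eigenvectorUnitary {A : Matrix d d ℂ} (hA : A.IsHermitian) :
    basisProb hA.eigenvectorUnitary A = hA.eigenvalues := by
  ext j
  have h := hA.conjStarAlgAut_star_eigenvectorUnitary
  rw [Unitary.conjStarAlgAut_star_apply] at h
  simp [basisProb, h]

theorem re_trace_mul_matLog {B : Matrix d d ℂ} (hB : B.IsHermitian) (A : Matrix d d ℂ) :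
    (trace (A * matLog B)).re =
      ∑ j, log (hB.eigenvalues j) * basisProb hB.eigenvectorUnitary A j := by
  rw [trace_mul_comm, matLog, dif_pos hB, re_trace_conj_diagonal_mul]

theorem relEnt_eq {ρ σ : Matrix d d ℂ} (hρ : ρ.IsHermitian) (hσ : σ.IsHermitian) :
    relEnt ρ σ = ∑ i, hρ.eigenvalues i * log (hρ.eigenvalues i) -
      ∑ j, basisProb hσ.eigenvectorUnitary ρ j * log (hσ.eigenvalues j) := by
  rw [relEnt, mul_sub, trace_sub, Complex.sub_re, re_trace_mul_matLog hρ,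
    re_trace_mul_matLog hσ, basisProb_eigenvectorUnitary]
  simp only [mul_comm]

theorem basisProb_eq_sum_normSq {A U : Matrix d d ℂ} (hA : A.IsHermitian) (j : d) :
    basisProb U A j = ∑ i, Complex.normSq ((star U * hA.eigenvectorUnitary) j i) *
      hA.eigenvalues i := by
  rw [basisProb, ← re_mul_diagonal_mul_star_apply_self]
  conv_lhs => rw [hA.spectral_theorem, Unitary.conjStarAlgAut_apply]
  simp only [Function.comp_def, RCLike.ofReal_eq_complex_ofReal, star_mul, star_star, mul_assoc]

theorem sum_convexOn_basisProb_le {A U : Matrix d d ℂ} (hA : A.IsHermitian)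
    (hU : U ∈ unitaryGroup d ℂ) {s : Set ℝ} {f : ℝ → ℝ} (hf : ConvexOn ℝ s f)
    (hs : ∀ i, hA.eigenvalues i ∈ s) :
    ∑ j, f (basisProb U A j) ≤ ∑ i, f (hA.eigenvalues i) := by
  set W := star U * (hA.eigenvectorUnitary : Matrix d d ℂ)
  have hW : W ∈ unitaryGroup d ℂ := mul_mem (Unitary.star_mem hU) hA.eigenvectorUnitary.2
  calc ∑ j, f (basisProb U A j)
      ≤ ∑ j, ∑ i, Complex.normSq (W j i) * f (hA.eigenvalues i) := by
        refine Finset.sum_le_sum fun j _ => ?_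
        rw [basisProb_eq_sum_normSq hA]
        exact hf.map_sum_le (fun i _ => Complex.normSq_nonneg _) (sum_normSq_row_eq_one hW j)
          fun i _ => hs i
    _ = ∑ i, f (hA.eigenvalues i) := by
        rw [Finset.sum_comm]
        simp only [← Finset.sum_mul, sum_normSq_col_eq_one hW, one_mul]

theorem basisProb_eq_zero_of_suppLE {ρ σ : Matrix d d ℂ} (hσ : σ.IsHermitian)
    (hsupp : SuppLE ρ σ) {j : d} (hj : hσ.eigenvalues j = 0) :
    basisProb hσ.eigenvectorUnitary ρ j = 0 := by
  have hker : ρ *ᵥ ⇑(hσ.eigenvectorBasis j) = 0 :=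
    hsupp _ (by rw [hσ.mulVec_eigenvectorBasis, hj, zero_smul])
  set U : Matrix d d ℂ := (hσ.eigenvectorUnitary : Matrix d d ℂ)
  have hentry : (star U * ρ * U) j j = (star U *ᵥ (ρ *ᵥ (U *ᵥ Pi.single j 1))) j := by
    rw [mulVec_mulVec, mulVec_mulVec, mulVec_single_one]; rfl
  rw [basisProb, hentry, hσ.eigenvectorUnitary_mulVec, hker]
  simp

theorem isPOVMElem_conj_diagonal {U : Matrix d d ℂ} (hU : U ∈ unitaryGroup d ℂ) {f : d → ℝ}
    (hf₀ : ∀ j, 0 ≤ f j) (hf₁ : ∀ j, f j ≤ 1) :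
    IsPOVMElem (U * diagonal (fun j => (f j : ℂ)) * star U) := by
  have hpsd : ∀ g : d → ℝ, (∀ j, 0 ≤ g j) →
      (U * diagonal (fun j => (g j : ℂ)) * star U).PosSemidef := fun g hg => by
    rw [star_eq_conjTranspose]
    exact (posSemidef_diagonal_iff.2 fun j => Complex.zero_le_real.2 (hg j)).mul_mul_conjTranspose_same U
  have hcompl : 1 - U * diagonal (fun j => (f j : ℂ)) * star U =
      U * diagonal (fun j => ((1 - f j : ℝ) : ℂ)) * star U := by
    simp only [Complex.ofReal_sub, Complex.ofReal_one]
    rw [← diagonal_sub]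
    simp [mul_sub, sub_mul, mem_unitaryGroup_iff.1 hU]
  exact ⟨hpsd f hf₀, hcompl ▸ hpsd _ fun j => sub_nonneg.2 (hf₁ j)⟩

theorem sum_mul_log_div_le_relEnt {ρ σ : Matrix d d ℂ} (hρ : ρ.PosSemidef) (hσ : σ.IsHermitian)
    (hsupp : SuppLE ρ σ) :
    ∑ j, basisProb hσ.eigenvectorUnitary ρ j *
      log (basisProb hσ.eigenvectorUnitary ρ j / hσ.eigenvalues j) ≤ relEnt ρ σ := by
  have hmaj := sum_convexOn_basisProb_le hρ.1 hσ.eigenvectorUnitary.2 convexOn_mul_log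
    fun i => Set.mem_Ici.2 (hρ.eigenvalues_nonneg i)
  rw [relEnt_eq hρ.1 hσ, Finset.sum_congr rfl fun j _ =>
    mul_log_div_eq_of_imp (basisProb_eq_zero_of_suppLE hσ hsupp), Finset.sum_sub_distrib]
  linarith

end Matrix

section State

variable {n : ℕ}

theorem isProbDist_basisProb {U ρ : Matrix (Fin n) (Fin n) ℂ} (hU : U ∈ unitaryGroup (Fin n) ℂ)
    (hρ : IsState ρ) : IsProbDist (basisProb U ρ) := by
  refine ⟨fun j => ?_, ?_⟩
  · have hpsd := hρ.1.conjTranspose_mul_mul_same U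
    rw [← star_eq_conjTranspose] at hpsd
    exact (Complex.nonneg_iff.1 hpsd.diag_nonneg).1
  · calc ∑ j, basisProb U ρ j = (trace (star U * ρ * U)).re := by
          simp [basisProb, trace, Complex.re_sum]
      _ = 1 := by rw [trace_mul_cycle, mem_unitaryGroup_iff.1 hU, one_mul, hρ.2, Complex.one_re]

theorem IsState.isProbDist_eigenvalues {ρ : Matrix (Fin n) (Fin n) ℂ} (hρ : IsState ρ) :
    IsProbDist hρ.1.1.eigenvalues :=
  basisProb_eigenvectorUnitary hρ.1.1 ▸ isProbDist_basisProb hρ.1.1.eigenvectorUnitary.2 hρ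

theorem relEnt_le_sum_neg_mul_log {ρ σ : Matrix (Fin n) (Fin n) ℂ} (hρ : IsState ρ)
    (hσ : σ.IsHermitian) :
    relEnt ρ σ ≤ ∑ j, -(basisProb hσ.eigenvectorUnitary ρ j * log (hσ.eigenvalues j)) := by
  have hentropy : ∑ i, hρ.1.1.eigenvalues i * log (hρ.1.1.eigenvalues i) ≤ 0 :=
    Finset.sum_nonpos fun i _ => mul_log_nonpos (hρ.isProbDist_eigenvalues.1 i)
      (hρ.isProbDist_eigenvalues.le_one i)
  rw [relEnt_eq hρ.1.1 hσ, Finset.sum_neg_distrib]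
  linarith

end State

/-- A two-outcome measurement nearly preserving relative entropy. -/
theorem two_outcome_measurement_relEnt {n : ℕ} (ρ σ : Matrix (Fin n) (Fin n) ℂ)
    (hρ : IsState ρ) (hσ : IsState σ) (hsupp : SuppLE ρ σ) :
    ∃ F : Matrix (Fin n) (Fin n) ℂ, IsPOVMElem F ∧
      relEnt ρ σ ≥
        trR F ρ * Real.logb 2 (trR F ρ / trR F σ) +
          (1 - trR F ρ) * Real.logb 2 ((1 - trR F ρ) / (1 - trR F σ)) ∧
      trR F ρ * Real.logb 2 (trR F ρ / trR F σ) +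
          (1 - trR F ρ) * Real.logb 2 ((1 - trR F ρ) / (1 - trR F σ))
        ≥ (relEnt ρ σ - Real.logb 2 n) / ((n : ℝ) - 1) - 1 := by
  set U : Matrix (Fin n) (Fin n) ℂ := (hσ.1.1.eigenvectorUnitary : Matrix (Fin n) (Fin n) ℂ)
  have hU : U ∈ unitaryGroup (Fin n) ℂ := hσ.1.1.eigenvectorUnitary.2
  obtain ⟨i, hupper, hlower⟩ := exists_binKL_mul_log_two_bounds
    (isProbDist_basisProb hU hρ) hσ.isProbDist_eigenvalues
    (fun j => basisProb_eq_zero_of_suppLE hσ.1.1 hsupp)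
    (sum_mul_log_div_le_relEnt hρ.1 hσ.1.1 hsupp) (relEnt_le_sum_neg_mul_log hρ hσ.1.1)
  set f : Fin n → ℝ := Pi.single i (log 2)
  have htrR : ∀ A, trR (U * diagonal (fun j => (f j : ℂ)) * star U) A = log 2 * basisProb U A i :=
    fun A => by simp [trR, re_trace_conj_diagonal_mul, f, Pi.single_apply]
  have hf : ∀ j, 0 ≤ f j ∧ f j ≤ 1 := fun j => by
    by_cases hj : j = i
    · simp only [f, hj, Pi.single_eq_same]
      exact ⟨(log_pos one_lt_two).le, by linarith [log_two_lt_d9]⟩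
    · simp [f, hj]
  have hF := isPOVMElem_conj_diagonal hU (fun j => (hf j).1) fun j => (hf j).2
  refine ⟨_, hF, ?_, ?_⟩ <;>
    rw [htrR, htrR, basisProb_eigenvectorUnitary, ← binKL_div_log_two] <;> assumption

end
end

section
/- Substate lemma for pure states: Let ψ : Fin n → ℂ be a unit vector and σ a quantum state on ℂ^n with supp(|ψ⟩⟨ψ|) ⊆ supp(σ), and let k := D(|ψ⟩⟨ψ| ‖ σ). Then for every real r ≥ 1 there exists a unit vector φ : Fin n → ℂ such that ‖|ψ⟩⟨ψ| − |φ⟩⟨φ|‖₁ ≤ 2/√r and the matrix σ − ((r−1)/(r·2^{r·k}))·|φ⟩⟨φ| is positive semidefinite. -/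
open Matrix BigOperators
open scoped ComplexOrder

noncomputable section

/-!
The support hypothesis puts `ψ` in the range of `σ`, hence `c |ψ⟩⟨ψ| ≤ σ` for some `c > 0`; this
bounds the set whose supremum is `k` (without it `sSup` would return the junk value `0`).

Fix `ε > 0`, let `u` solve `(σ + ε) u = ψ` and put `G = ⟨ψ, u⟩`, `H = ‖u‖²`, `D = ⟨u, σ u⟩`,
so that `G = D + ε H`. Testing the observational divergence on the POVM element `|u⟩⟨u| / H`
gives `k ≥ (G² / H) log₂ (G² / D)`, and for `ε = 1 / ((r - 1) 2 ^ (r k))` this forces `r ε G ≤ 1`.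
The witness is `φ = σ u / ‖σ u‖`. Since `σ u = ψ - ε u`, we have `⟨ψ, σ u⟩ = 1 - ε G` and
`(1 - ε G)² ≤ ‖σ u‖² ≤ 1 - ε G`, so `φ` is close to `ψ`. Cauchy–Schwarz for the semi-inner
product of `σ` gives `|σ u⟩⟨σ u| ≤ D σ`, which is the substate bound.
-/

section Ketbra

variable {m : Type*}

lemma ketbra_eq_vecMulVec (x : m → ℂ) : ketbra x = vecMulVec x (star x) := rfl

lemma ketbra_smul (c : ℝ) (x : m → ℂ) : ketbra ((c : ℂ) • x) = ((c ^ 2 : ℝ) : ℂ) • ketbra x := by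
  ext a b
  simp [ketbra]
  ring

variable [Fintype m]

lemma star_dotProduct_self_eq_sum_normSq (x : m → ℂ) :
    star x ⬝ᵥ x = ((∑ i, Complex.normSq (x i) : ℝ) : ℂ) := by
  simp [dotProduct, Complex.normSq_eq_conj_mul_self]

lemma sum_normSq_smul (c : ℝ) (x : m → ℂ) :
    ∑ i, Complex.normSq (((c : ℂ) • x) i) = c ^ 2 * ∑ i, Complex.normSq (x i) := by
  simp [Finset.mul_sum, sq]

lemma sum_normSq_add (x y : m → ℂ) :
    ∑ i, Complex.normSq ((x + y) i) =
      ∑ i, Complex.normSq (x i) + 2 * (star x ⬝ᵥ y).re + ∑ i, Complex.normSq (y i) := by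
  have h : ∀ i, Complex.normSq ((x + y) i) =
      Complex.normSq (x i) + 2 * (star (x i) * y i).re + Complex.normSq (y i) := fun i => by
    simp only [Pi.add_apply, Complex.normSq_add, Complex.star_def, Complex.mul_re, Complex.conj_re,
      Complex.conj_im]
    ring
  simp only [h, Finset.sum_add_distrib, ← Finset.mul_sum, dotProduct, Complex.re_sum, Pi.star_apply]

lemma sum_normSq_sub (x y : m → ℂ) :
    ∑ i, Complex.normSq ((x - y) i) =
      ∑ i, Complex.normSq (x i) - 2 * (star x ⬝ᵥ y).re + ∑ i, Complex.normSq (y i) := by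
  simpa [sub_eq_add_neg] using sum_normSq_add x (-y)

lemma ketbra_posSemidef (x : m → ℂ) : (ketbra x).PosSemidef :=
  posSemidef_vecMulVec_self_star x

lemma ketbra_mulVec (x v : m → ℂ) : ketbra x *ᵥ v = (star x ⬝ᵥ v) • x := by
  rw [ketbra_eq_vecMulVec, vecMulVec_mulVec, op_smul_eq_smul]

lemma star_dotProduct_ketbra_mulVec (x v : m → ℂ) :
    star v ⬝ᵥ (ketbra x *ᵥ v) = (Complex.normSq (star x ⬝ᵥ v) : ℂ) := by
  rw [ketbra_mulVec, dotProduct_smul, smul_eq_mul, star_dotProduct (v := v), Complex.star_def,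
    Complex.mul_conj]

lemma trace_mul_ketbra (A : Matrix m m ℂ) (x : m → ℂ) :
    (A * ketbra x).trace = star x ⬝ᵥ (A *ᵥ x) := by
  rw [ketbra_eq_vecMulVec, mul_vecMulVec, trace_vecMulVec, dotProduct_comm]

lemma isState_ketbra {ψ : m → ℂ} (hψ : ∑ i, Complex.normSq (ψ i) = 1) : IsState (ketbra ψ) :=
  ⟨ketbra_posSemidef ψ, by
    rw [ketbra_eq_vecMulVec, trace_vecMulVec, dotProduct_comm, star_dotProduct_self_eq_sum_normSq,
      hψ, Complex.ofReal_one]⟩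

end Ketbra

section PosSemidef

variable {m : Type*} [Fintype m] {A : Matrix m m ℂ}

lemma Matrix.PosSemidef.ofReal_re_star_dotProduct_mulVec (hA : A.PosSemidef) (x : m → ℂ) :
    (((star x ⬝ᵥ (A *ᵥ x)).re : ℝ) : ℂ) = star x ⬝ᵥ (A *ᵥ x) :=
  Complex.ext rfl (Complex.nonneg_iff.1 (hA.dotProduct_mulVec_nonneg x)).2

lemma Matrix.PosSemidef.normSq_star_dotProduct_mulVec_le (hA : A.PosSemidef) (x y : m → ℂ) :
    Complex.normSq (star x ⬝ᵥ (A *ᵥ y)) ≤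
      (star x ⬝ᵥ (A *ᵥ x)).re * (star y ⬝ᵥ (A *ᵥ y)).re := by
  let _ := A.toSeminormedAddCommGroup hA
  let _ := A.toInnerProductSpace hA
  have key := inner_mul_inner_self_le (𝕜 := ℂ) x y
  rw [norm_inner_symm y x] at key
  change ‖(A *ᵥ y) ⬝ᵥ star x‖ * ‖(A *ᵥ y) ⬝ᵥ star x‖ ≤
    ((A *ᵥ x) ⬝ᵥ star x).re * ((A *ᵥ y) ⬝ᵥ star y).re at key
  simpa only [dotProduct_comm _ (star _), Complex.normSq_eq_norm_sq, sq] using key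

lemma normSq_star_dotProduct_le (x y : m → ℂ) :
    Complex.normSq (star x ⬝ᵥ y) ≤ (∑ i, Complex.normSq (x i)) * ∑ i, Complex.normSq (y i) := by
  classical
  simpa [star_dotProduct_self_eq_sum_normSq] using
    PosSemidef.one.normSq_star_dotProduct_mulVec_le x y

open scoped MatrixOrder in
lemma Matrix.PosSemidef.re_trace_mul_nonneg {B : Matrix m m ℂ} (hA : A.PosSemidef)
    (hB : B.PosSemidef) : 0 ≤ (A * B).trace.re := by
  classical
  have hS := (CFC.sqrt_nonneg B).posSemidef
  have hconj : (CFC.sqrt B * A * CFC.sqrt B).PosSemidef := by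
    simpa [hS.1.eq] using hA.conjTranspose_mul_mul_same (CFC.sqrt B)
  have htrace : (A * B).trace = (CFC.sqrt B * A * CFC.sqrt B).trace := by
    conv_lhs => rw [← CFC.sqrt_mul_sqrt_self B hB.nonneg, ← Matrix.mul_assoc, trace_mul_comm,
      ← Matrix.mul_assoc]
  rw [htrace]
  exact (Complex.nonneg_iff.1 hconj.trace_nonneg).1

lemma posSemidef_sub_smul_ketbra_of_le (hA : A.IsHermitian) {c : ℝ} {x : m → ℂ}
    (h : ∀ v, c * Complex.normSq (star x ⬝ᵥ v) ≤ (star v ⬝ᵥ (A *ᵥ v)).re) :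
    (A - (c : ℂ) • ketbra x).PosSemidef := by
  refine .of_dotProduct_mulVec_nonneg
    (hA.sub ((ketbra_posSemidef x).1.smul (Complex.conj_ofReal c))) fun v => ?_
  rw [sub_mulVec, dotProduct_sub, smul_mulVec, dotProduct_smul, star_dotProduct_ketbra_mulVec,
    Complex.nonneg_iff]
  have him := hA.im_star_dotProduct_mulVec_self v
  simp only [RCLike.im_to_complex] at him
  simp [him, h v]

lemma Matrix.PosSemidef.sub_smul_ketbra_mulVec (hA : A.PosSemidef) (u : m → ℂ) {c : ℝ}
    (hc0 : 0 ≤ c) (hc : c * (star u ⬝ᵥ (A *ᵥ u)).re ≤ 1) :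
    (A - (c : ℂ) • ketbra (A *ᵥ u)).PosSemidef := by
  refine posSemidef_sub_smul_ketbra_of_le hA.1 fun v => ?_
  calc c * Complex.normSq (star (A *ᵥ u) ⬝ᵥ v)
      = c * Complex.normSq (star u ⬝ᵥ (A *ᵥ v)) := by
        rw [star_mulVec, ← dotProduct_mulVec, hA.1.eq]
    _ ≤ c * ((star u ⬝ᵥ (A *ᵥ u)).re * (star v ⬝ᵥ (A *ᵥ v)).re) :=
        mul_le_mul_of_nonneg_left (hA.normSq_star_dotProduct_mulVec_le u v) hc0
    _ ≤ (star v ⬝ᵥ (A *ᵥ v)).re := by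
        rw [← mul_assoc]
        exact mul_le_of_le_one_left (hA.re_dotProduct_nonneg v) hc

end PosSemidef

section Support

variable {m : Type*} [Fintype m] {ψ : m → ℂ} {σ : Matrix m m ℂ}

lemma SuppLE.star_dotProduct_eq_zero (h : SuppLE (ketbra ψ) σ) {v : m → ℂ} (hv : σ *ᵥ v = 0) :
    star ψ ⬝ᵥ v = 0 := by
  simpa [star_dotProduct_ketbra_mulVec] using congrArg (star v ⬝ᵥ ·) (h v hv)

lemma SuppLE.exists_mulVec_eq (hσ : σ.IsHermitian) (h : SuppLE (ketbra ψ) σ) :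
    ∃ w, σ *ᵥ w = ψ := by
  classical
  have hmem : WithLp.toLp 2 ψ ∈ LinearMap.range (toEuclideanLin σ) := by
    rw [← Submodule.orthogonal_orthogonal (LinearMap.range _),
      (isSymmetric_toEuclideanLin_iff.2 hσ).orthogonal_range]
    intro v hv
    have hv' : σ *ᵥ WithLp.ofLp v = 0 := by simpa using congrArg WithLp.ofLp hv
    rw [EuclideanSpace.inner_eq_star_dotProduct, dotProduct_star, dotProduct_comm,
      h.star_dotProduct_eq_zero hv', star_zero]
  obtain ⟨w, hw⟩ := hmem
  exact ⟨WithLp.ofLp w, by simpa using congrArg WithLp.ofLp hw⟩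

lemma SuppLE.exists_posSemidef_sub_smul_ketbra (hσ : σ.PosSemidef) (h : SuppLE (ketbra ψ) σ) :
    ∃ c : ℝ, 0 < c ∧ (σ - (c : ℂ) • ketbra ψ).PosSemidef := by
  obtain ⟨w, rfl⟩ := h.exists_mulVec_eq hσ.1
  have hw := hσ.re_dotProduct_nonneg w
  refine ⟨(1 + (star w ⬝ᵥ (σ *ᵥ w)).re)⁻¹, by positivity,
    hσ.sub_smul_ketbra_mulVec w (by positivity) ?_⟩
  rw [inv_mul_le_one₀ (by positivity)]
  linarith

end Support

section ObsDiv

variable {m : Type*} [Fintype m]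

lemma trR_smul_ketbra (c : ℝ) (u : m → ℂ) (ρ : Matrix m m ℂ) :
    trR ((c : ℂ) • ketbra u) ρ = c * (star u ⬝ᵥ (ρ *ᵥ u)).re := by
  rw [trR, Matrix.smul_mul, trace_smul, trace_mul_comm, trace_mul_ketbra, smul_eq_mul,
    Complex.re_ofReal_mul]

variable [DecidableEq m]

lemma trR_one {ρ : Matrix m m ℂ} (hρ : ρ.trace = 1) : trR 1 ρ = 1 := by
  simp [trR, hρ]

lemma isPOVMElem_one : IsPOVMElem (1 : Matrix m m ℂ) :=
  ⟨PosSemidef.one, by simpa using PosSemidef.zero⟩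

lemma isPOVMElem_smul_ketbra {c : ℝ} (hc0 : 0 ≤ c) {u : m → ℂ}
    (hc : c * ∑ i, Complex.normSq (u i) ≤ 1) : IsPOVMElem ((c : ℂ) • ketbra u) := by
  refine ⟨(ketbra_posSemidef u).smul (by exact_mod_cast hc0),
    posSemidef_sub_smul_ketbra_of_le isHermitian_one fun v => ?_⟩
  rw [one_mulVec, star_dotProduct_self_eq_sum_normSq, Complex.ofReal_re]
  calc c * Complex.normSq (star u ⬝ᵥ v)
      ≤ c * ((∑ i, Complex.normSq (u i)) * ∑ i, Complex.normSq (v i)) :=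
        mul_le_mul_of_nonneg_left (normSq_star_dotProduct_le u v) hc0
    _ ≤ ∑ i, Complex.normSq (v i) := by
        rw [← mul_assoc]
        exact mul_le_of_le_one_left (Finset.sum_nonneg fun i _ => Complex.normSq_nonneg _) hc

lemma trR_mul_logb_le_of_dominated {ρ σ F : Matrix m m ℂ} (hρ : IsState ρ) {c : ℝ} (hc : 0 < c)
    (hdom : (σ - (c : ℂ) • ρ).PosSemidef) (hF : IsPOVMElem F) :
    trR F ρ * Real.logb 2 (trR F ρ / trR F σ) ≤ max 0 (Real.logb 2 c⁻¹) := by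
  set t := trR F ρ
  set s := trR F σ
  have ht0 : 0 ≤ t := hF.1.re_trace_mul_nonneg hρ.1
  have ht1 : t ≤ 1 := by
    have := hF.2.re_trace_mul_nonneg hρ.1
    rwa [Matrix.sub_mul, trace_sub, Complex.sub_re, Matrix.one_mul, hρ.2, Complex.one_re,
      sub_nonneg] at this
  have hts : c * t ≤ s := by
    have := hF.1.re_trace_mul_nonneg hdom
    rwa [Matrix.mul_sub, trace_sub, Complex.sub_re, Matrix.mul_smul, trace_smul, smul_eq_mul,
      Complex.re_ofReal_mul, sub_nonneg] at this
  rcases ht0.eq_or_lt with ht | ht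
  · simp [← ht]
  have hs : 0 < s := lt_of_lt_of_le (mul_pos hc ht) hts
  rcases le_or_gt t s with hle | hlt
  · exact (mul_nonpos_of_nonneg_of_nonpos ht0 (Real.logb_nonpos one_lt_two (by positivity)
      ((div_le_one hs).2 hle))).trans (le_max_left _ _)
  have hlog : 0 ≤ Real.logb 2 (t / s) := Real.logb_nonneg one_lt_two ((one_lt_div hs).2 hlt).le
  calc t * Real.logb 2 (t / s) ≤ Real.logb 2 (t / s) := mul_le_of_le_one_left hlog ht1
    _ ≤ Real.logb 2 c⁻¹ := by
        refine Real.logb_le_logb_of_le one_lt_two (by positivity) ?_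
        rw [div_le_iff₀ hs, ← div_eq_inv_mul, le_div_iff₀ hc, mul_comm]
        exact hts
    _ ≤ _ := le_max_right _ _

lemma le_obsDiv_of_dominated {ρ σ F : Matrix m m ℂ} (hρ : IsState ρ) {c : ℝ} (hc : 0 < c)
    (hdom : (σ - (c : ℂ) • ρ).PosSemidef) (hF : IsPOVMElem F) (hs : trR F σ ≠ 0) :
    trR F ρ * Real.logb 2 (trR F ρ / trR F σ) ≤ obsDiv ρ σ :=
  le_csSup ⟨max 0 (Real.logb 2 c⁻¹), by
    rintro _ ⟨F', hF', -, rfl⟩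
    exact trR_mul_logb_le_of_dominated hρ hc hdom hF'⟩ ⟨F, hF, hs, rfl⟩

lemma obsDiv_nonneg_of_dominated {ρ σ : Matrix m m ℂ} (hρ : IsState ρ) (hσ : σ.trace = 1)
    {c : ℝ} (hc : 0 < c) (hdom : (σ - (c : ℂ) • ρ).PosSemidef) : 0 ≤ obsDiv ρ σ := by
  simpa [trR_one hρ.2, trR_one hσ] using
    le_obsDiv_of_dominated hρ hc hdom isPOVMElem_one (by simp [trR_one hσ])

end ObsDiv

section TraceNorm

variable {m : Type*} [Fintype m]

lemma OrthonormalBasis.sum_normSq_star_dotProduct (e : OrthonormalBasis m ℂ (EuclideanSpace ℂ m))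
    (z : m → ℂ) :
    ∑ i, Complex.normSq (star z ⬝ᵥ WithLp.ofLp (e i)) = ∑ i, Complex.normSq (z i) := by
  have := e.sum_sq_norm_inner_left (WithLp.toLp 2 z)
  simp only [EuclideanSpace.inner_eq_star_dotProduct, EuclideanSpace.norm_sq_eq] at this
  simpa [Complex.normSq_eq_norm_sq, dotProduct_comm] using this

lemma abs_normSq_sub_normSq_le (a b : ℂ) :
    |Complex.normSq a - Complex.normSq b| ≤ ‖a + b‖ * ‖a - b‖ := by
  have : Complex.normSq a - Complex.normSq b = ((a + b) * (starRingEnd ℂ) (a - b)).re := by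
    simp only [Complex.mul_re, Complex.add_re, Complex.add_im, Complex.sub_re, Complex.sub_im,
      Complex.conj_re, Complex.conj_im, Complex.normSq_apply]
    ring
  rw [this, ← Complex.norm_conj (a - b), ← norm_mul]
  exact Complex.abs_re_le_norm _

def normalized (y : m → ℂ) : m → ℂ :=
  (((√(∑ i, Complex.normSq (y i)))⁻¹ : ℝ) : ℂ) • y

lemma sum_normSq_normalized {y : m → ℂ} (hy : 0 < ∑ i, Complex.normSq (y i)) :
    ∑ i, Complex.normSq (normalized y i) = 1 := by
  rw [normalized, sum_normSq_smul, inv_pow, Real.sq_sqrt hy.le, inv_mul_cancel₀ hy.ne']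

lemma ketbra_normalized (y : m → ℂ) :
    ketbra (normalized y) = (((∑ i, Complex.normSq (y i))⁻¹ : ℝ) : ℂ) • ketbra y := by
  rw [normalized, ketbra_smul, inv_pow,
    Real.sq_sqrt (Finset.sum_nonneg fun i _ => Complex.normSq_nonneg (y i))]

variable [DecidableEq m]

lemma traceNorm_ketbra_sub_ketbra_le (x y : m → ℂ) :
    traceNorm (ketbra x - ketbra y) ≤
      √(∑ i, Complex.normSq ((x + y) i)) * √(∑ i, Complex.normSq ((x - y) i)) := by
  have hA := (ketbra_posSemidef x).1.sub (ketbra_posSemidef y).1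
  set e := hA.eigenvectorBasis
  have heig : ∀ i, |hA.eigenvalues i| ≤
      ‖star (x + y) ⬝ᵥ WithLp.ofLp (e i)‖ * ‖star (x - y) ⬝ᵥ WithLp.ofLp (e i)‖ := fun i => by
    rw [hA.eigenvalues_eq, sub_mulVec, dotProduct_sub, star_dotProduct_ketbra_mulVec,
      star_dotProduct_ketbra_mulVec, star_add, star_sub, add_dotProduct, sub_dotProduct]
    simpa using abs_normSq_sub_normSq_le (star x ⬝ᵥ WithLp.ofLp (e i)) (star y ⬝ᵥ WithLp.ofLp (e i))
  rw [traceNorm, dif_pos hA, ← e.sum_normSq_star_dotProduct (x + y),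
    ← e.sum_normSq_star_dotProduct (x - y)]
  simp only [Complex.normSq_eq_norm_sq]
  exact (Finset.sum_le_sum fun i _ => heig i).trans (Real.sum_mul_le_sqrt_mul_sqrt _ _ _)

lemma traceNorm_ketbra_sub_ketbra_le_of_unit {x y : m → ℂ}
    (hx : ∑ i, Complex.normSq (x i) = 1) (hy : ∑ i, Complex.normSq (y i) = 1) :
    traceNorm (ketbra x - ketbra y) ≤ 2 * √(1 - (star x ⬝ᵥ y).re ^ 2) := by
  have hnonneg := Finset.sum_nonneg fun i (_ : i ∈ Finset.univ) =>
    Complex.normSq_nonneg ((x + y) i)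
  rw [sum_normSq_add, hx, hy] at hnonneg
  refine (traceNorm_ketbra_sub_ketbra_le x y).trans_eq ?_
  rw [sum_normSq_add, sum_normSq_sub, hx, hy, ← Real.sqrt_mul hnonneg,
    show ∀ g : ℝ, (1 + 2 * g + 1) * (1 - 2 * g + 1) = 2 ^ 2 * (1 - g ^ 2) by intro g; ring,
    Real.sqrt_mul (by positivity), Real.sqrt_sq zero_le_two]

lemma traceNorm_ketbra_sub_ketbra_normalized_le {x y : m → ℂ}
    (hx : ∑ i, Complex.normSq (x i) = 1) (hy : 0 < ∑ i, Complex.normSq (y i))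
    (hxy : ∑ i, Complex.normSq (y i) ≤ (star x ⬝ᵥ y).re) :
    traceNorm (ketbra x - ketbra (normalized y)) ≤ 2 * √(1 - (star x ⬝ᵥ y).re) := by
  refine (traceNorm_ketbra_sub_ketbra_le_of_unit hx (sum_normSq_normalized hy)).trans ?_
  rw [normalized, dotProduct_smul, smul_eq_mul, Complex.re_ofReal_mul, mul_pow, inv_pow,
    Real.sq_sqrt hy.le, inv_mul_eq_div]
  have : (star x ⬝ᵥ y).re ≤ (star x ⬝ᵥ y).re ^ 2 / ∑ i, Complex.normSq (y i) := by
    rw [le_div_iff₀ hy]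
    nlinarith
  gcongr

end TraceNorm

lemma mul_le_one_of_mul_logb_le {k r ε D H : ℝ} (hk : 0 ≤ k) (hr : 1 < r)
    (hε : ε * ((r - 1) * 2 ^ (r * k)) = 1) (hD : 0 < D) (hGH : (D + ε * H) ^ 2 ≤ H)
    (h : (D + ε * H) ^ 2 / H * Real.logb 2 ((D + ε * H) ^ 2 / D) ≤ k) :
    r * (ε * (D + ε * H)) ≤ 1 := by
  set G := D + ε * H
  set T : ℝ := 2 ^ (r * k)
  by_contra! hE
  have hT : 0 < T := by positivity
  have hε0 : 0 < ε := pos_of_mul_pos_left (hε.symm ▸ one_pos) (by positivity)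
  have hH0 : 0 ≤ H := (sq_nonneg G).trans hGH
  have hG : 0 < G := by positivity
  have hH : 0 < H := (pow_pos hG 2).trans_le hGH
  have ht : 1 < r * (G ^ 2 / H) := by
    refine hE.trans_le (mul_le_mul_of_nonneg_left ?_ (by linarith))
    rw [le_div_iff₀ hH]
    nlinarith
  have hTD : T < G ^ 2 / D := by
    rw [lt_div_iff₀ hD]
    have hD_le : D ≤ G * (1 - ε * G) := by nlinarith
    have hT_lt : T * (1 - ε * G) < G := by nlinarith
    nlinarith
  have hlog : r * k < Real.logb 2 (G ^ 2 / D) := by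
    rw [← Real.logb_rpow two_pos one_lt_two.ne' (x := r * k)]
    exact Real.logb_lt_logb one_lt_two hT hTD
  nlinarith [mul_lt_mul_of_pos_left hlog (by positivity : 0 < G ^ 2 / H)]

section Resolvent

variable {m : Type*} [Fintype m] {σ : Matrix m m ℂ} {ψ u : m → ℂ} {ε : ℝ}

lemma Matrix.PosSemidef.exists_mulVec_add_smul_eq [DecidableEq m] (hσ : σ.PosSemidef)
    (hε : 0 < ε) (ψ : m → ℂ) : ∃ u, σ *ᵥ u + (ε : ℂ) • u = ψ := by
  have hM : (σ + (ε : ℂ) • 1).PosDef :=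
    PosDef.posSemidef_add hσ (PosDef.one.smul (by exact_mod_cast hε))
  obtain ⟨u, hu⟩ := mulVec_surjective_iff_isUnit.2 hM.isUnit ψ
  exact ⟨u, by rwa [add_mulVec, smul_mulVec, one_mulVec] at hu⟩

lemma Matrix.PosSemidef.star_dotProduct_resolvent (hσ : σ.PosSemidef)
    (hu : σ *ᵥ u + (ε : ℂ) • u = ψ) :
    star ψ ⬝ᵥ u = (((star u ⬝ᵥ (σ *ᵥ u)).re + ε * ∑ i, Complex.normSq (u i) : ℝ) : ℂ) := by
  rw [← hu, star_add, add_dotProduct, star_mulVec, ← dotProduct_mulVec, hσ.1.eq, star_smul,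
    smul_dotProduct, star_dotProduct_self_eq_sum_normSq, Complex.ofReal_add,
    hσ.ofReal_re_star_dotProduct_mulVec]
  simp

lemma Matrix.PosSemidef.resolvent_sq_le (hσ : σ.PosSemidef) (hu : σ *ᵥ u + (ε : ℂ) • u = ψ)
    (hψ : ∑ i, Complex.normSq (ψ i) = 1) :
    ((star u ⬝ᵥ (σ *ᵥ u)).re + ε * ∑ i, Complex.normSq (u i)) ^ 2 ≤ ∑ i, Complex.normSq (u i) := by
  have := normSq_star_dotProduct_le ψ u
  rwa [hσ.star_dotProduct_resolvent hu, hψ, one_mul, Complex.normSq_ofReal, ← sq] at this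

lemma Matrix.PosSemidef.re_star_dotProduct_resolvent_pos (hσ : σ.PosSemidef)
    (hu : σ *ᵥ u + (ε : ℂ) • u = ψ) (hsupp : SuppLE (ketbra ψ) σ) (hψ : ψ ≠ 0) :
    0 < (star u ⬝ᵥ (σ *ᵥ u)).re := by
  refine (hσ.re_dotProduct_nonneg u).lt_of_ne fun h0 => hψ ?_
  have hσu : σ *ᵥ u = 0 := (hσ.dotProduct_mulVec_zero_iff u).1 <| by
    rw [← hσ.ofReal_re_star_dotProduct_mulVec]
    exact_mod_cast h0.symm
  have hψu : ψ = (ε : ℂ) • u := by rw [← hu, hσu, zero_add]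
  have := congrArg (star ψ ⬝ᵥ ·) hψu
  simp only [dotProduct_smul, hsupp.star_dotProduct_eq_zero hσu, smul_zero] at this
  exact dotProduct_star_self_eq_zero.1 this

lemma Matrix.PosSemidef.resolvent_mul_logb_le_obsDiv [DecidableEq m] (hσ : σ.PosSemidef)
    (hu : σ *ᵥ u + (ε : ℂ) • u = ψ) (hψ : ∑ i, Complex.normSq (ψ i) = 1) (hε : 0 ≤ ε) {c : ℝ}
    (hc : 0 < c) (hdom : (σ - (c : ℂ) • ketbra ψ).PosSemidef) (hD : 0 < (star u ⬝ᵥ (σ *ᵥ u)).re) :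
    (((star u ⬝ᵥ (σ *ᵥ u)).re + ε * ∑ i, Complex.normSq (u i)) ^ 2 / ∑ i, Complex.normSq (u i)) *
      Real.logb 2 (((star u ⬝ᵥ (σ *ᵥ u)).re + ε * ∑ i, Complex.normSq (u i)) ^ 2 /
        (star u ⬝ᵥ (σ *ᵥ u)).re) ≤ obsDiv (ketbra ψ) σ := by
  have hH : 0 < ∑ i, Complex.normSq (u i) :=
    (pow_pos (add_pos_of_pos_of_nonneg hD (mul_nonneg hε (Finset.sum_nonneg fun i _ =>
      Complex.normSq_nonneg _))) 2).trans_le (hσ.resolvent_sq_le hu hψ)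
  have := le_obsDiv_of_dominated (isState_ketbra hψ) hc hdom
    (isPOVMElem_smul_ketbra (inv_nonneg.2 hH.le) (inv_mul_cancel₀ hH.ne').le)
    (by rw [trR_smul_ketbra]; positivity)
  rwa [trR_smul_ketbra, trR_smul_ketbra, star_dotProduct_ketbra_mulVec, Complex.ofReal_re,
    hσ.star_dotProduct_resolvent hu, Complex.normSq_ofReal, ← sq,
    mul_div_mul_left _ _ (inv_ne_zero hH.ne'), inv_mul_eq_div] at this

lemma Matrix.PosSemidef.re_star_dotProduct_mulVec_resolvent (hσ : σ.PosSemidef)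
    (hu : σ *ᵥ u + (ε : ℂ) • u = ψ) (hψ : ∑ i, Complex.normSq (ψ i) = 1) :
    (star ψ ⬝ᵥ (σ *ᵥ u)).re =
      1 - ε * ((star u ⬝ᵥ (σ *ᵥ u)).re + ε * ∑ i, Complex.normSq (u i)) := by
  conv_lhs => rw [eq_sub_of_add_eq hu]
  rw [dotProduct_sub, dotProduct_smul, hσ.star_dotProduct_resolvent hu,
    star_dotProduct_self_eq_sum_normSq, hψ]
  simp

lemma Matrix.PosSemidef.sum_normSq_mulVec_resolvent_mem_Icc (hσ : σ.PosSemidef)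
    (hu : σ *ᵥ u + (ε : ℂ) • u = ψ) (hψ : ∑ i, Complex.normSq (ψ i) = 1) (hε : 0 ≤ ε) :
    ∑ i, Complex.normSq ((σ *ᵥ u) i) ∈ Set.Icc
      ((1 - ε * ((star u ⬝ᵥ (σ *ᵥ u)).re + ε * ∑ i, Complex.normSq (u i))) ^ 2)
      (1 - ε * ((star u ⬝ᵥ (σ *ᵥ u)).re + ε * ∑ i, Complex.normSq (u i))) := by
  have hGH := hσ.resolvent_sq_le hu hψ
  have hD : 0 ≤ (star u ⬝ᵥ (σ *ᵥ u)).re := hσ.re_dotProduct_nonneg u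
  have hW : ∑ i, Complex.normSq ((σ *ᵥ u) i) =
      1 - 2 * (ε * ((star u ⬝ᵥ (σ *ᵥ u)).re + ε * ∑ i, Complex.normSq (u i))) +
        ε ^ 2 * ∑ i, Complex.normSq (u i) := by
    conv_lhs => rw [eq_sub_of_add_eq hu]
    rw [sum_normSq_sub, sum_normSq_smul, hψ, dotProduct_smul, hσ.star_dotProduct_resolvent hu,
      smul_eq_mul, Complex.re_ofReal_mul, Complex.ofReal_re]
  rw [hW]
  constructor
  · nlinarith [mul_le_mul_of_nonneg_left hGH (sq_nonneg ε)]
  · nlinarith [mul_nonneg hε hD]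

lemma Matrix.PosSemidef.exists_substate_of_resolvent [DecidableEq m] (hσ : σ.PosSemidef)
    (hu : σ *ᵥ u + (ε : ℂ) • u = ψ) (hψ : ∑ i, Complex.normSq (ψ i) = 1) (hε : 0 < ε)
    {r : ℝ} (hr : 1 < r)
    (hE : r * (ε * ((star u ⬝ᵥ (σ *ᵥ u)).re + ε * ∑ i, Complex.normSq (u i))) ≤ 1) :
    ∃ φ : m → ℂ, ∑ i, Complex.normSq (φ i) = 1 ∧ traceNorm (ketbra ψ - ketbra φ) ≤ 2 / √r ∧
      (σ - ((ε * (r - 1) ^ 2 / r : ℝ) : ℂ) • ketbra φ).PosSemidef := by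
  have hψσu := hσ.re_star_dotProduct_mulVec_resolvent hu hψ
  obtain ⟨hW_lower, hW_upper⟩ := hσ.sum_normSq_mulVec_resolvent_mem_Icc hu hψ hε.le
  set D := (star u ⬝ᵥ (σ *ᵥ u)).re
  set G := D + ε * ∑ i, Complex.normSq (u i)
  set W := ∑ i, Complex.normSq ((σ *ᵥ u) i)
  have hEr : ε * G ≤ r⁻¹ := by
    rw [← one_div, le_div_iff₀ (by linarith)]
    linarith
  have hE1 : ε * G < 1 := hEr.trans_lt (inv_lt_one_of_one_lt₀ hr)
  have hW : 0 < W := lt_of_lt_of_le (by nlinarith) hW_lower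
  refine ⟨normalized (σ *ᵥ u), sum_normSq_normalized hW, ?_, ?_⟩
  · calc traceNorm (ketbra ψ - ketbra (normalized (σ *ᵥ u)))
        ≤ 2 * √(1 - (star ψ ⬝ᵥ (σ *ᵥ u)).re) :=
          traceNorm_ketbra_sub_ketbra_normalized_le hψ hW (hψσu ▸ hW_upper)
      _ ≤ 2 * √r⁻¹ := by
          gcongr
          linarith
      _ = 2 / √r := by rw [Real.sqrt_inv, div_eq_mul_inv]
  · rw [ketbra_normalized, smul_smul, ← Complex.ofReal_mul]
    refine hσ.sub_smul_ketbra_mulVec u (by positivity) ?_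
    rw [mul_right_comm, ← div_eq_mul_inv, div_le_one hW]
    calc ε * (r - 1) ^ 2 / r * D ≤ ε * (r - 1) ^ 2 / r * G := by
          gcongr
          exact le_add_of_nonneg_right (mul_nonneg hε.le (Finset.sum_nonneg fun i _ =>
            Complex.normSq_nonneg _))
      _ ≤ (1 - ε * G) ^ 2 := by
          have hG : 0 ≤ ε * G := by nlinarith
          rw [div_mul_eq_mul_div, div_le_iff₀ (by linarith)]
          nlinarith [mul_nonneg (by linarith : 0 ≤ r - ε * G) (by linarith : 0 ≤ 1 - r * (ε * G))]
      _ ≤ W := hW_lower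

end Resolvent

/-- Substate lemma for pure states. -/
theorem pure_state_substate {n : ℕ} (ψ : Fin n → ℂ)
    (hψ : ∑ i, Complex.normSq (ψ i) = 1)
    (σ : Matrix (Fin n) (Fin n) ℂ) (hσ : IsState σ)
    (hsupp : SuppLE (ketbra ψ) σ)
    (k : ℝ) (hk : k = obsDiv (ketbra ψ) σ)
    (r : ℝ) (hr : 1 ≤ r) :
    ∃ φ : Fin n → ℂ, (∑ i, Complex.normSq (φ i) = 1) ∧
      traceNorm (ketbra ψ - ketbra φ) ≤ 2 / Real.sqrt r ∧
      (σ - (((r - 1) / (r * (2 : ℝ) ^ (r * k)) : ℝ) : ℂ) • ketbra φ).PosSemidef := by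
  obtain ⟨hσpsd, hσtr⟩ := hσ
  obtain ⟨c, hc, hdom⟩ := hsupp.exists_posSemidef_sub_smul_ketbra hσpsd
  have hk0 : 0 ≤ k := hk ▸ obsDiv_nonneg_of_dominated (isState_ketbra hψ) hσtr hc hdom
  rcases hr.eq_or_lt with rfl | hr
  · refine ⟨ψ, hψ, ?_, by simpa using hσpsd⟩
    have := traceNorm_ketbra_sub_ketbra_le_of_unit hψ hψ
    simp only [star_dotProduct_self_eq_sum_normSq, hψ, Complex.ofReal_one, Complex.one_re] at this
    norm_num at this ⊢
    linarith
  have hT : 0 < (r - 1) * (2 : ℝ) ^ (r * k) := mul_pos (by linarith) (by positivity)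
  set ε := ((r - 1) * (2 : ℝ) ^ (r * k))⁻¹
  have hε : 0 < ε := inv_pos.2 hT
  obtain ⟨u, hu⟩ := hσpsd.exists_mulVec_add_smul_eq hε ψ
  have hD := hσpsd.re_star_dotProduct_resolvent_pos hu hsupp (by rintro rfl; simp at hψ)
  have hobs := hk ▸ hσpsd.resolvent_mul_logb_le_obsDiv hu hψ hε.le hc hdom hD
  have hE := mul_le_one_of_mul_logb_le hk0 hr (inv_mul_cancel₀ hT.ne') hD
    (hσpsd.resolvent_sq_le hu hψ) hobs
  obtain ⟨φ, hφ, htr, hpsd⟩ := hσpsd.exists_substate_of_resolvent hu hψ hε hr hE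
  refine ⟨φ, hφ, htr, ?_⟩
  convert hpsd using 4
  simp only [ε]
  field_simp
end
end

section
/- Attainment of the observational divergence supremum: Let ρ and σ be quantum states on ℂ^n with supp(ρ) ⊆ supp(σ). Then there exists a POVM element F on ℂ^n with Tr(Fσ) ≠ 0 such that for every POVM element G on ℂ^n with Tr(Gσ) ≠ 0, Tr(Gρ)·logb 2 (Tr(Gρ)/Tr(Gσ)) ≤ Tr(Fρ)·logb 2 (Tr(Fρ)/Tr(Fσ)); i.e., the supremum defining D(ρ‖σ) is attained and is finite. -/
open Matrix BigOperators
open scoped ComplexOrder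

noncomputable section

/-!
The POVM elements form the order interval `[0, 1]` of Hermitian matrices, which is
compact. Support inclusion gives `ρ ≤ c • σ`, so `Tr(Fρ) / Tr(Fσ) ∈ [0, c]` for every POVM
element `F`. The objective is the perspective `q * h (p / q)` of `h t = t log₂ t` at
`(p, q) = (Tr(Fρ), Tr(Fσ))`; as `p / q` stays in `[0, c]` it is bounded by `q * sup |h|`,
hence continuous also where `q = 0`. So a maximiser exists, and if it has `Tr(Fσ) = 0` then
its value is `0`, which `F = 1` attains too.
-/

open scoped MatrixOrder

theorem continuousOn_perspective {h : ℝ → ℝ} {s : Set ℝ} (hh : ContinuousOn h s)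
    (hs : IsCompact s) :
    ContinuousOn (fun x : ℝ × ℝ => x.2 * h (x.1 / x.2)) {x | x.1 / x.2 ∈ s} := by
  intro x hx
  rcases eq_or_ne x.2 0 with hx2 | hx2
  · obtain ⟨M, hM⟩ := hs.exists_bound_of_continuousOn hh
    have hlim : Filter.Tendsto (fun y : ℝ × ℝ => M * ‖y.2‖)
        (nhdsWithin x {x | x.1 / x.2 ∈ s}) (nhds 0) := by
      have := (continuous_const.mul continuous_snd.norm).tendsto
        (f := fun y : ℝ × ℝ => M * ‖y.2‖) x
      simpa [hx2] using this.mono_left nhdsWithin_le_nhds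
    rw [ContinuousWithinAt, hx2, zero_mul]
    refine squeeze_zero_norm' ?_ hlim
    filter_upwards [self_mem_nhdsWithin] with y hy
    rw [norm_mul, mul_comm]
    exact mul_le_mul_of_nonneg_right (hM _ hy) (norm_nonneg _)
  · have hdiv : ContinuousAt (fun y : ℝ × ℝ => y.1 / y.2) x :=
      continuousAt_fst.div continuousAt_snd hx2
    exact continuousAt_snd.continuousWithinAt.mul
      (ContinuousWithinAt.comp (g := h) (hh _ hx) hdiv.continuousWithinAt fun _ hy => hy)

-- Also true for `q = 0`, where both sides vanish because `p / 0 = 0`.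
theorem mul_logb_div_eq (b p q : ℝ) :
    p * Real.logb b (p / q) = q * (p / q * Real.logb b (p / q)) := by
  rcases eq_or_ne q 0 with rfl | hq
  · simp
  · rw [← mul_assoc, mul_div_cancel₀ _ hq]

theorem continuousOn_mul_logb_div (b c : ℝ) :
    ContinuousOn (fun x : ℝ × ℝ => x.1 * Real.logb b (x.1 / x.2))
      {x | x.1 / x.2 ∈ Set.Icc 0 c} := by
  have hh : Continuous fun t : ℝ => t * Real.logb b t := by
    simpa [Real.logb, mul_div_assoc] using Real.continuous_mul_log.div_const (Real.log b)
  simpa only [mul_logb_div_eq] using continuousOn_perspective hh.continuousOn isCompact_Icc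

theorem SuppLE.mul_eq_zero {d : Type*} [Fintype d] {A B M : Matrix d d ℂ} (h : SuppLE A B)
    (hBM : B * M = 0) : A * M = 0 :=
  ext_iff_mulVec.mpr fun v => by
    rw [← mulVec_mulVec, h _ (by rw [mulVec_mulVec, hBM, zero_mulVec]), zero_mulVec]

-- `P` is the spectral projection of `B` onto its nonzero eigenvalues.
theorem Matrix.PosSemidef.exists_isStarProjection_le_smul {d : Type*} [Fintype d]
    [DecidableEq d] {B : Matrix d d ℂ} (hB : B.PosSemidef) :
    ∃ P : Matrix d d ℂ, IsStarProjection P ∧ B * P = B ∧ ∃ c : ℝ, 0 ≤ c ∧ P ≤ c • B := by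
  have hBsa : IsSelfAdjoint B := hB.isHermitian.isSelfAdjoint
  have hcont (f : ℝ → ℝ) : ContinuousOn f (spectrum ℝ B) := B.finite_real_spectrum.continuousOn f
  let supp : ℝ → ℝ := fun x => if x = 0 then 0 else 1
  obtain ⟨c, hc⟩ := (B.finite_real_spectrum.image (·⁻¹)).bddAbove
  refine ⟨cfc supp B, ⟨?_, cfc_predicate _ _⟩, ?_, max c 0, le_max_right _ _, ?_⟩
  · rw [IsIdempotentElem, ← cfc_mul _ _ _ (hcont _) (hcont _)]
    congr 1; funext x; by_cases hx : x = 0 <;> simp [supp, hx]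
  · calc B * cfc supp B = cfc (fun x => x * supp x) B := by
          rw [cfc_mul _ _ _ (hcont _) (hcont _), cfc_id' ℝ B hBsa]
      _ = B := by
          conv_rhs => rw [← cfc_id' ℝ B hBsa]
          congr 1; funext x; by_cases hx : x = 0 <;> simp [supp, hx]
  · rw [← cfc_const_mul_id _ _ hBsa]
    refine cfc_mono (fun x hx => ?_) (hcont _) (hcont _)
    rcases (spectrum_nonneg_of_nonneg hB.nonneg hx).eq_or_lt with hx0 | hx0
    · simp [supp, ← hx0]
    · have hxc : x⁻¹ ≤ max c 0 := (hc ⟨x, hx, rfl⟩).trans (le_max_left _ _)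
      rw [inv_le_iff_one_le_mul₀ hx0] at hxc
      simpa [supp, hx0.ne'] using hxc

-- With `P` the support projection of `B`, `A = P A P ≤ r P ≤ r c B` for `r` bounding `A`.
theorem exists_le_smul_of_suppLE {d : Type*} [Fintype d] [DecidableEq d] {A B : Matrix d d ℂ}
    (hA : A.IsHermitian) (hB : B.PosSemidef) (hAB : SuppLE A B) :
    ∃ c : ℝ, 0 ≤ c ∧ A ≤ c • B := by
  obtain ⟨P, hP, hBP, c, hc, hPB⟩ := hB.exists_isStarProjection_le_smul
  obtain ⟨r, hr⟩ := A.finite_real_spectrum.bddAbove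
  have hAP : A * P = A := by
    have := hAB.mul_eq_zero (M := 1 - P) (by rw [mul_sub, hBP, mul_one, sub_self])
    rwa [mul_sub, mul_one, sub_eq_zero, eq_comm] at this
  have hPA : P * A = A := by
    simpa [hA.star_eq, hP.isSelfAdjoint.star_eq] using congrArg star hAP
  refine ⟨max r 0 * c, by positivity, ?_⟩
  calc A = star P * A * P := by rw [hP.isSelfAdjoint.star_eq, hPA, hAP]
    _ ≤ star P * algebraMap ℝ _ (max r 0) * P :=
        star_left_conjugate_le_conjugate (le_algebraMap_of_spectrum_le
          (fun x hx => (hr hx).trans (le_max_left _ _)) hA.isSelfAdjoint) P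
    _ = max r 0 • P := by
        rw [Algebra.algebraMap_eq_smul_one, hP.isSelfAdjoint.star_eq, mul_smul_comm, mul_one,
          smul_mul_assoc, hP.isIdempotentElem.eq]
    _ ≤ max r 0 • c • B := smul_le_smul_of_nonneg_left hPB (le_max_right _ _)
    _ = (max r 0 * c) • B := smul_smul _ _ _

section trR

variable {d : Type*} [Fintype d]

theorem trR_nonneg {F ρ : Matrix d d ℂ} (hF : F.PosSemidef) (hρ : ρ.PosSemidef) :
    0 ≤ trR F ρ := by
  classical
  obtain ⟨C, rfl⟩ := CStarAlgebra.nonneg_iff_eq_star_mul_self.mp hF.nonneg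
  rw [trR, Matrix.mul_assoc, Matrix.trace_mul_comm, Matrix.mul_assoc, ← Matrix.mul_assoc]
  exact (Complex.nonneg_iff.mp
    (Matrix.nonneg_iff_posSemidef.mp (star_right_conjugate_nonneg hρ.nonneg C)).trace_nonneg).1

theorem trR_le_mul_of_le_smul [DecidableEq d] {F ρ σ : Matrix d d ℂ} {c : ℝ}
    (hF : F.PosSemidef) (h : ρ ≤ c • σ) : trR F ρ ≤ c * trR F σ := by
  have := trR_nonneg hF (Matrix.nonneg_iff_posSemidef.mp (sub_nonneg.mpr h))
  simpa [trR, Matrix.mul_sub, Matrix.trace_sub, Matrix.trace_smul] using this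

theorem continuous_trR_left (ρ : Matrix d d ℂ) :
    Continuous fun F : Matrix d d ℂ => trR F ρ := by
  unfold trR; fun_prop

theorem trR_one_s18 [DecidableEq d] (ρ : Matrix d d ℂ) : trR 1 ρ = ρ.trace.re := by
  simp [trR]

end trR

theorem isCompact_setOf_isPOVMElem {d : Type*} [Fintype d] [DecidableEq d] :
    IsCompact {F : Matrix d d ℂ | IsPOVMElem F} := by
  have hIcc : {F : Matrix d d ℂ | IsPOVMElem F} = Set.Icc 0 1 := by
    ext F; simp [IsPOVMElem, Matrix.le_iff]
  rw [hIcc]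
  open scoped Matrix.Norms.L2Operator in
  exact Metric.isCompact_of_isClosed_isBounded isClosed_Icc
    ((Metric.isBounded_closedBall (x := 0) (r := ‖(1 : Matrix d d ℂ)‖)).subset fun F hF => by
      simpa using CStarAlgebra.norm_le_norm_of_nonneg_of_le hF.1 hF.2)

theorem trR_div_trR_mem_Icc {d : Type*} [Fintype d] [DecidableEq d] {F ρ σ : Matrix d d ℂ}
    {c : ℝ} (hF : F.PosSemidef) (hρ : ρ.PosSemidef) (hσ : σ.PosSemidef) (hc : 0 ≤ c)
    (h : ρ ≤ c • σ) : trR F ρ / trR F σ ∈ Set.Icc 0 c :=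
  ⟨div_nonneg (trR_nonneg hF hρ) (trR_nonneg hF hσ),
    div_le_of_le_mul₀ (trR_nonneg hF hσ) hc (trR_le_mul_of_le_smul hF h)⟩

/-- Attainment of the observational divergence supremum. -/
theorem obsDiv_attained {n : ℕ} (ρ σ : Matrix (Fin n) (Fin n) ℂ)
    (hρ : IsState ρ) (hσ : IsState σ) (hsupp : SuppLE ρ σ) :
    ∃ F : Matrix (Fin n) (Fin n) ℂ, IsPOVMElem F ∧ trR F σ ≠ 0 ∧
      (∀ G : Matrix (Fin n) (Fin n) ℂ, IsPOVMElem G → trR G σ ≠ 0 →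
        trR G ρ * Real.logb 2 (trR G ρ / trR G σ) ≤
          trR F ρ * Real.logb 2 (trR F ρ / trR F σ)) ∧
      obsDiv ρ σ = trR F ρ * Real.logb 2 (trR F ρ / trR F σ) := by
  set g : Matrix (Fin n) (Fin n) ℂ → ℝ := fun F => trR F ρ * Real.logb 2 (trR F ρ / trR F σ)
  set K := {F : Matrix (Fin n) (Fin n) ℂ | IsPOVMElem F}
  obtain ⟨c, hc, hρσ⟩ := exists_le_smul_of_suppLE hρ.1.1 hσ.1 hsupp
  have hg : ContinuousOn g K :=
    (continuousOn_mul_logb_div 2 c).comp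
      ((continuous_trR_left ρ).prodMk (continuous_trR_left σ)).continuousOn
      fun F hF => trR_div_trR_mem_Icc hF.1 hρ.1 hσ.1 hc hρσ
  have h1 : IsPOVMElem (1 : Matrix (Fin n) (Fin n) ℂ) :=
    ⟨PosSemidef.one, by simp [PosSemidef.zero]⟩
  obtain ⟨F₀, hF₀, hF₀max⟩ := isCompact_setOf_isPOVMElem.exists_isMaxOn ⟨1, h1⟩ hg
  -- A maximiser with `trR F₀ σ = 0` has value `0 = g 1`, since `p / 0 = 0` in `ℝ`.
  obtain ⟨F, hF, hFσ, hFmax⟩ : ∃ F ∈ K, trR F σ ≠ 0 ∧ IsMaxOn g K F := by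
    by_cases hF₀σ : trR F₀ σ = 0
    · refine ⟨1, h1, by simp [trR_one_s18, hσ.2], fun G hG => ?_⟩
      simpa [g, hF₀σ, trR_one_s18, hρ.2, hσ.2] using hF₀max hG
    · exact ⟨F₀, hF₀, hF₀σ, hF₀max⟩
  refine ⟨F, hF, hFσ, fun G hG _ => hFmax hG, ?_⟩
  exact IsGreatest.csSup_eq ⟨⟨F, hF, hFσ, rfl⟩, by rintro _ ⟨G, hG, -, rfl⟩; exact hFmax hG⟩
end
end
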